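/- arXiv:1506.06038 — 5 statements merged into one kernel-verified Lean document; each statement's English description precedes it below -/
import Mathlib

section
/- Let Σ be an alphabet and 𝕄 = (M,+,val,𝟘) a timed valuation monoid. Then every recognizable quantitative timed language over Σ and 𝕄 belongs to N^Seq(Σ,𝕄), i.e., Rec(Σ,𝕄) ⊆ N^Seq(Σ,𝕄). -/
open scoped NNReal Classical

/-! # Core definitions: timed automata and weighted timed automata -/

/-- Comparison operators ⋈ ∈ {<, ≤, =, ≥, >}. -/
inductive Cmp : Type
  | lt | le | eq | ge | gt
  deriving DecidableEq

/-- Evaluation of a comparison `r ⋈ c` for `r ∈ ℝ≥0` and `c ∈ ℕ`. -/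
def Cmp.eval : Cmp → ℝ≥0 → ℕ → Prop
  | .lt, r, c => r < (c : ℝ≥0)
  | .le, r, c => r ≤ (c : ℝ≥0)
  | .eq, r, c => r = (c : ℝ≥0)
  | .ge, r, c => (c : ℝ≥0) ≤ r
  | .gt, r, c => (c : ℝ≥0) < r

/-- Clock constraints over a set `C` of clocks: `True` or conjunctions of `x ⋈ c`. -/
inductive ClockConstraint (C : Type) : Type
  | tt : ClockConstraint C
  | atom : C → Cmp → ℕ → ClockConstraint C
  | conj : ClockConstraint C → ClockConstraint C → ClockConstraint C

/-- A clock valuation assigns a non-negative real to each clock. -/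
def ClockVal (C : Type) : Type := C → ℝ≥0

/-- Satisfaction of clock constraints. -/
def ClockConstraint.Sat {C : Type} (ν : ClockVal C) : ClockConstraint C → Prop
  | .tt => True
  | .atom x op c => op.eval (ν x) c
  | .conj φ ψ => φ.Sat ν ∧ ψ.Sat ν

/-- `ν + t`: add `t` to every clock. -/
def ClockVal.add {C : Type} (ν : ClockVal C) (t : ℝ≥0) : ClockVal C := fun x => ν x + t

/-- `ν[Λ := 0]`: reset the clocks in `Λ` to `0`. -/
noncomputable def ClockVal.reset {C : Type} (ν : ClockVal C) (Λ : Set C) : ClockVal C :=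
  fun x => if x ∈ Λ then 0 else ν x

/-- The clock valuation assigning `0` to every clock. -/
def ClockVal.zero {C : Type} : ClockVal C := fun _ => 0

/-- An edge of a timed automaton: an element of `L × Σ × Φ(C) × 2^C × L`. -/
structure Edge (L A C : Type) : Type where
  src : L
  label : A
  guard : ClockConstraint C
  reset : Set C
  dst : L

/-- A timed automaton over the alphabet `A`. -/
structure TimedAutomaton (A : Type) : Type 1 where
  L : Type
  C : Type
  finL : Finite L
  finC : Finite C
  I : Set L
  F : Set L
  E : Set (Edge L A C)
  finE : E.Finite

/-- A (non-empty finite) timed word over `A`. -/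
abbrev TimedWord (A : Type) : Type := { w : List (A × ℝ≥0) // w ≠ [] }

/-- `T.IsRunFrom ℓ ν w es` holds iff `es` is the sequence of edges of a run of `T`
reading the timed word `w`, starting in location `ℓ` with clock valuation `ν`,
and ending in a final location. -/
def TimedAutomaton.IsRunFrom {A : Type} (T : TimedAutomaton A) :
    T.L → ClockVal T.C → List (A × ℝ≥0) → List (Edge T.L A T.C) → Prop
  | ℓ, _, [], [] => ℓ ∈ T.F
  | ℓ, ν, (a, t) :: w, e :: es =>
      e ∈ T.E ∧ e.src = ℓ ∧ e.label = a ∧ e.guard.Sat (ν.add t) ∧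
      T.IsRunFrom e.dst ((ν.add t).reset e.reset) w es
  | _, _, [], _ :: _ => False
  | _, _, _ :: _, [] => False

/-- `Run_T(w)`: the set of runs (identified with their edge sequences) of `T` on `w`. -/
def TimedAutomaton.RunOn {A : Type} (T : TimedAutomaton A) (w : TimedWord A) :
    Set (List (Edge T.L A T.C)) :=
  { es | ∃ ℓ₀ ∈ T.I, T.IsRunFrom ℓ₀ ClockVal.zero w.1 es }

/-- `L(T)`: the timed language accepted by `T`. -/
def TimedAutomaton.Lang {A : Type} (T : TimedAutomaton A) : Set (TimedWord A) :=
  { w | (T.RunOn w).Nonempty }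

/-- A timed automaton is unambiguous if every timed word has at most one run. -/
def TimedAutomaton.Unambiguous {A : Type} (T : TimedAutomaton A) : Prop :=
  ∀ w : TimedWord A, (T.RunOn w).Subsingleton

/-- A timed automaton is deterministic if it has a single initial location and the guards of
any two distinct edges with the same source and label are jointly unsatisfiable. -/
def TimedAutomaton.Deterministic {A : Type} (T : TimedAutomaton A) : Prop :=
  (∃ ℓ, T.I = {ℓ}) ∧
  ∀ e₁ ∈ T.E, ∀ e₂ ∈ T.E, e₁.src = e₂.src → e₁.label = e₂.label → e₁ ≠ e₂ →
    ∀ ν : ClockVal T.C, ¬ (e₁.guard.Sat ν ∧ e₂.guard.Sat ν)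

/-- A timed automaton is sequential if it has a single initial location and any two edges
with the same source and label are equal. -/
def TimedAutomaton.Sequential {A : Type} (T : TimedAutomaton A) : Prop :=
  (∃ ℓ, T.I = {ℓ}) ∧
  ∀ e₁ ∈ T.E, ∀ e₂ ∈ T.E, e₁.src = e₂.src → e₁.label = e₂.label → e₁ = e₂

/-- A timed language is recognizable by a timed automaton satisfying `P`. -/
def TLRecognizableBy {A : Type} (P : TimedAutomaton A → Prop) (𝓛 : Set (TimedWord A)) : Prop :=
  ∃ T : TimedAutomaton A, P T ∧ T.Lang = 𝓛

/-- A weighted timed automaton over the alphabet `A` and (the domain `M` of) a timed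
valuation monoid: a timed automaton together with weights on locations and edges.
The timed valuation monoid itself is given by an `AddCommMonoid M` instance together with a
timed valuation function `val : List ((M × M) × ℝ≥0) → M` (only its values on non-empty
lists, i.e. on `𝕋(M×M)⁺`, ever matter). -/
structure WTA (A M : Type) extends TimedAutomaton A where
  wtL : L → M
  wtE : Edge L A C → M

/-- The timed word `wt♯(ρ) ∈ 𝕋(M×M)⁺` associated with a run: the `i`-th letter is
`((wt(ℓ_{i-1}), wt(e_i)), t_i)`, where `ℓ_{i-1}` is the source location of edge `e_i`. -/
def WTA.runWord {A M : Type} (W : WTA A M) (w : List (A × ℝ≥0))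
    (es : List (Edge W.L A W.C)) : List ((M × M) × ℝ≥0) :=
  List.zipWith (fun (p : A × ℝ≥0) e => ((W.wtL e.src, W.wtE e), p.2)) w es

/-- The behavior `‖W‖ : 𝕋A⁺ → M` of a WTA: `‖W‖(w) = Σ (val(wt♯(ρ)) : ρ ∈ Run_W(w))`,
the empty sum being `0` (the monoid unit `𝟘`). -/
noncomputable def WTA.behavior {A M : Type} [AddCommMonoid M]
    (val : List ((M × M) × ℝ≥0) → M) (W : WTA A M) (w : TimedWord A) : M :=
  ∑ᶠ es ∈ W.toTimedAutomaton.RunOn w, val (W.runWord w.1 es)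

/-- A quantitative timed language `r : 𝕋A⁺ → M` is recognizable over the timed valuation
monoid `(M, +, val, 𝟘)` by a WTA whose underlying timed automaton satisfies `P`. -/
def QTLRecognizableBy {A M : Type} [AddCommMonoid M] (val : List ((M × M) × ℝ≥0) → M)
    (P : TimedAutomaton A → Prop) (r : TimedWord A → M) : Prop :=
  ∃ W : WTA A M, P W.toTimedAutomaton ∧ ∀ w, W.behavior val w = r w

/-- Recognizability (no restriction on the underlying timed automaton). -/
def QTLRecognizable {A M : Type} [AddCommMonoid M] (val : List ((M × M) × ℝ≥0) → M)
    (r : TimedWord A → M) : Prop :=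
  ∃ W : WTA A M, ∀ w, W.behavior val w = r w

/-- Renaming of timed words along `h : Γ → A`. -/
def mapTimedWord {Γ A : Type} (h : Γ → A) (v : TimedWord Γ) : TimedWord A :=
  ⟨v.1.map (fun p => (h p.1, p.2)), by
    cases v with
    | mk l hl => cases l with
      | nil => exact absurd rfl hl
      | cons p l => simp⟩

/-- `h(r)(w) = Σ (r(v) : v ∈ 𝕋Γ⁺, h(v) = w)` (a finite sum when `Γ` is finite). -/
noncomputable def pushQTL {Γ A M : Type} [AddCommMonoid M] (h : Γ → A)
    (r : TimedWord Γ → M) (w : TimedWord A) : M :=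
  ∑ᶠ v ∈ { v : TimedWord Γ | mapTimedWord h v = w }, r v

/-- `(val ∘ g)(w) = val((g(a₁),t₁)…(g(aₙ),tₙ))`. -/
def valComp {A M : Type} (val : List ((M × M) × ℝ≥0) → M) (g : A → M × M)
    (w : TimedWord A) : M :=
  val (w.1.map (fun p => (g p.1, p.2)))

/-- The intersection `r ∩ 𝓛` of a quantitative timed language with a timed language. -/
noncomputable def interQTL {A M : Type} [Zero M] (r : TimedWord A → M)
    (𝓛 : Set (TimedWord A)) (w : TimedWord A) : M :=
  if w ∈ 𝓛 then r w else 0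

/-- Membership in the Nivat class `N^P(A, 𝕄)`: `𝕃 = h((val ∘ g) ∩ 𝓛)` for some alphabet `Γ`,
maps `h : Γ → A`, `g : Γ → M × M` and a timed language `𝓛` recognizable by a timed
automaton satisfying `P`. -/
def NivatMem {A M : Type} [AddCommMonoid M] (val : List ((M × M) × ℝ≥0) → M)
    (P : ∀ {Γ : Type}, TimedAutomaton Γ → Prop) (𝕃 : TimedWord A → M) : Prop :=
  ∃ (Γ : Type) (_ : Finite Γ) (_ : Nonempty Γ) (h : Γ → A) (g : Γ → M × M)
    (𝓛 : Set (TimedWord Γ)),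
      TLRecognizableBy P 𝓛 ∧ ∀ w, 𝕃 w = pushQTL h (interQTL (valComp val g) 𝓛) w

/-- Membership in the class `H^P(A, 𝕄)`: `𝕃 = h(r)` for some alphabet `Γ`, `h : Γ → A`
and a quantitative timed language `r` recognizable by a WTA whose underlying timed
automaton satisfies `P`. -/
def HMem {A M : Type} [AddCommMonoid M] (val : List ((M × M) × ℝ≥0) → M)
    (P : ∀ {Γ : Type}, TimedAutomaton Γ → Prop) (𝕃 : TimedWord A → M) : Prop :=
  ∃ (Γ : Type) (_ : Finite Γ) (_ : Nonempty Γ) (h : Γ → A) (r : TimedWord Γ → M),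
      QTLRecognizableBy val (fun T => P T) r ∧ ∀ w, 𝕃 w = pushQTL h r w

/-- Idempotency of a timed valuation monoid. -/
def IsIdempotent (M : Type) [Add M] : Prop := ∀ m : M, m + m = m

/-- Location-independence of a timed valuation function: the value of `val` on a non-empty
timed word over `M × M` depends only on the second components and the time stamps. -/
def LocIndep {M : Type} (val : List ((M × M) × ℝ≥0) → M) : Prop :=
  ∀ l l' : List ((M × M) × ℝ≥0), l ≠ [] →
    l.map (fun p => (p.1.2, p.2)) = l'.map (fun p => (p.1.2, p.2)) → val l = val l'

/-!
Use the edges of `W` as the new alphabet. The automaton that, on reading the letter `e`, moves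
along `e` itself (with guard and resets of `e`, and a fresh initial state standing for all of
`W.I`) is sequential, since the edge taken is determined by the letter, and the words it accepts
are exactly the runs of `W` decorated with time stamps. Relabelling each edge by its label gives
back the input word, and weighting it by (weight of its source, weight of the edge) makes
`val ∘ g` of the decorated run equal to the weight of the run; so summing over preimages under
the relabelling is summing over runs.
-/

lemma finsum_mem_interQTL {A M : Type} [AddCommMonoid M] (f : TimedWord A → M)
    (𝓛 s : Set (TimedWord A)) :
    ∑ᶠ v ∈ s, interQTL f 𝓛 v = ∑ᶠ v ∈ s ∩ 𝓛, f v := by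
  have hind : ∀ v ∈ s, interQTL f 𝓛 v = 𝓛.indicator f v := fun v _ => rfl
  rw [finsum_mem_congr rfl hind, finsum_mem_def, Set.indicator_indicator, ← finsum_mem_def]

namespace WTA

variable {S M : Type} (W : WTA S M)

/-- `none` is padding that keeps the alphabet nonempty; `edgeAutomaton` never reads it. -/
abbrev EdgeAlphabet : Type := Option {e // e ∈ W.E}

/-- The locations of `W` that a state of `edgeAutomaton` stands for. -/
def origins : Option W.L → Set W.L
  | none => W.I
  | some ℓ => {ℓ}

def liftEdge (q : Option W.L) (e : {e // e ∈ W.E}) : Edge (Option W.L) W.EdgeAlphabet W.C :=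
  ⟨q, some e, e.1.guard, e.1.reset, some e.1.dst⟩

/-- Making `none` final when `W.I ∩ W.F` is nonempty only affects the empty word, which is not a
timed word. -/
noncomputable def edgeAutomaton : TimedAutomaton W.EdgeAlphabet where
  L := Option W.L
  C := W.C
  finL := by have := W.finL; infer_instance
  finC := W.finC
  I := {none}
  F := {q | ∃ ℓ ∈ W.origins q, ℓ ∈ W.F}
  E := (fun p : Option W.L × {e // e ∈ W.E} => W.liftEdge p.1 p.2) ''
    {p | p.2.1.src ∈ W.origins p.1}
  finE := by
    have := W.finL
    have := W.finE.to_subtype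
    exact (Set.toFinite _).image _

lemma edgeAutomaton_sequential : W.edgeAutomaton.Sequential := by
  refine ⟨⟨(none : Option W.L), rfl⟩, ?_⟩
  rintro _ ⟨⟨q, e⟩, -, rfl⟩ _ ⟨⟨q', e'⟩, -, rfl⟩ hsrc hlab
  cases hsrc
  cases hlab
  rfl

noncomputable def letterLabel [Nonempty S] : W.EdgeAlphabet → S
  | none => Classical.arbitrary S
  | some e => e.1.label

def letterWeight [Zero M] : W.EdgeAlphabet → M × M
  | none => (0, 0)
  | some e => (W.wtL e.1.src, W.wtE e.1)

noncomputable def decodeWord [Nonempty S] (vl : List (W.EdgeAlphabet × ℝ≥0)) :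
    List (S × ℝ≥0) :=
  vl.map fun p => (W.letterLabel p.1, p.2)

def decodeRun (vl : List (W.EdgeAlphabet × ℝ≥0)) : List (Edge W.L S W.C) :=
  vl.filterMap fun p => p.1.map Subtype.val

variable [Nonempty S]

lemma isRunFrom_of_edgeAutomaton_isRunFrom (vl : List (W.EdgeAlphabet × ℝ≥0))
    (es' : List (Edge (Option W.L) W.EdgeAlphabet W.C)) (q : Option W.L) (ν : ClockVal W.C)
    (h : W.edgeAutomaton.IsRunFrom q ν vl es') :
    (∃ ℓ ∈ W.origins q, W.IsRunFrom ℓ ν (W.decodeWord vl) (W.decodeRun vl)) ∧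
      ∀ p ∈ vl, p.1 ≠ none := by
  induction vl generalizing es' q ν with
  | nil =>
    cases es' with
    | nil => exact ⟨h, by simp⟩
    | cons => exact h.elim
  | cons p vl ih =>
    obtain ⟨γ, t⟩ := p
    cases es' with
    | nil => exact h.elim
    | cons e' es' =>
      obtain ⟨⟨⟨q₀, e⟩, he, rfl⟩, rfl, rfl, hsat, hrest⟩ := h
      obtain ⟨⟨_, rfl, hrun⟩, hsome⟩ := ih es' _ _ hrest
      refine ⟨⟨e.1.src, he, e.2, rfl, rfl, hsat, hrun⟩, ?_⟩
      rintro p (_ | ⟨_, hp⟩)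
      exacts [Option.some_ne_none e, hsome p hp]

lemma exists_edgeAutomaton_isRunFrom (wl : List (S × ℝ≥0)) (es : List (Edge W.L S W.C)) (ℓ : W.L)
    (ν : ClockVal W.C) (q : Option W.L) (h : W.IsRunFrom ℓ ν wl es) (hℓ : ℓ ∈ W.origins q) :
    ∃ (vl : List (W.EdgeAlphabet × ℝ≥0)) (es' : List (Edge (Option W.L) W.EdgeAlphabet W.C)),
      W.edgeAutomaton.IsRunFrom q ν vl es' ∧ W.decodeWord vl = wl ∧ W.decodeRun vl = es := by
  induction wl generalizing es ℓ ν q with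
  | nil =>
    cases es with
    | nil => exact ⟨[], [], ⟨ℓ, hℓ, h⟩, rfl, rfl⟩
    | cons => exact h.elim
  | cons p wl ih =>
    obtain ⟨a, t⟩ := p
    cases es with
    | nil => exact h.elim
    | cons e es =>
      obtain ⟨hE, rfl, rfl, hsat, hrest⟩ := h
      obtain ⟨vl, es', hrun, rfl, rfl⟩ := ih es e.dst _ (some e.dst) hrest rfl
      exact ⟨(some ⟨e, hE⟩, t) :: vl, W.liftEdge q ⟨e, hE⟩ :: es',
        ⟨⟨(q, ⟨e, hE⟩), hℓ, rfl⟩, rfl, rfl, hsat, hrun⟩, rfl, rfl⟩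

lemma eq_of_decode_eq {vl vl' : List (W.EdgeAlphabet × ℝ≥0)} (hs : ∀ p ∈ vl, p.1 ≠ none)
    (hs' : ∀ p ∈ vl', p.1 ≠ none) (hw : W.decodeWord vl = W.decodeWord vl')
    (hr : W.decodeRun vl = W.decodeRun vl') : vl = vl' := by
  induction vl generalizing vl' with
  | nil => exact (List.map_eq_nil_iff.mp hw.symm).symm
  | cons p vl ih =>
    cases vl' with
    | nil => exact absurd hw (List.cons_ne_nil _ _)
    | cons p' vl' =>
      obtain ⟨γ, t⟩ := p
      obtain ⟨γ', t'⟩ := p'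
      obtain ⟨e, rfl⟩ := Option.ne_none_iff_exists'.mp (hs _ List.mem_cons_self)
      obtain ⟨e', rfl⟩ := Option.ne_none_iff_exists'.mp (hs' _ List.mem_cons_self)
      simp only [decodeWord, decodeRun, List.map_cons, List.filterMap_cons, Option.map_some,
        List.cons.injEq, Prod.mk.injEq] at hw hr
      obtain rfl : e = e' := Subtype.ext hr.1
      rw [hw.1.2, ih (fun p hp => hs p (List.mem_cons_of_mem _ hp))
        (fun p hp => hs' p (List.mem_cons_of_mem _ hp)) hw.2 hr.2]

lemma runWord_decode [Zero M] (vl : List (W.EdgeAlphabet × ℝ≥0)) (hs : ∀ p ∈ vl, p.1 ≠ none) :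
    W.runWord (W.decodeWord vl) (W.decodeRun vl) = vl.map fun p => (W.letterWeight p.1, p.2) := by
  induction vl with
  | nil => rfl
  | cons p vl ih =>
    obtain ⟨γ, t⟩ := p
    obtain ⟨e, rfl⟩ := Option.ne_none_iff_exists'.mp (hs _ List.mem_cons_self)
    exact congrArg (_ :: ·) (ih fun p hp => hs p (List.mem_cons_of_mem _ hp))

lemma decode_of_mem_edgeAutomaton_lang {v : TimedWord W.EdgeAlphabet} (hv : v ∈ W.edgeAutomaton.Lang) :
    (∃ ℓ ∈ W.I, W.IsRunFrom ℓ ClockVal.zero (W.decodeWord v.1) (W.decodeRun v.1)) ∧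
      ∀ p ∈ v.1, p.1 ≠ none := by
  obtain ⟨es', q, rfl, hrun⟩ := hv
  exact W.isRunFrom_of_edgeAutomaton_isRunFrom v.1 es' none _ hrun

lemma bijOn_decodeRun (w : TimedWord S) :
    Set.BijOn (fun v : TimedWord W.EdgeAlphabet => W.decodeRun v.1)
      ({v | mapTimedWord W.letterLabel v = w} ∩ W.edgeAutomaton.Lang) (W.RunOn w) := by
  refine ⟨?_, ?_, ?_⟩
  · rintro v ⟨rfl, hv⟩
    exact (W.decode_of_mem_edgeAutomaton_lang hv).1
  · rintro v ⟨hvw, hv⟩ v' ⟨hvw', hv'⟩ hr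
    exact Subtype.ext (W.eq_of_decode_eq (W.decode_of_mem_edgeAutomaton_lang hv).2
      (W.decode_of_mem_edgeAutomaton_lang hv').2 (congrArg Subtype.val (hvw.trans hvw'.symm)) hr)
  · rintro es ⟨ℓ, hℓ, hrun⟩
    obtain ⟨vl, es', hrun', hw, rfl⟩ :=
      W.exists_edgeAutomaton_isRunFrom w.1 es ℓ ClockVal.zero none hrun hℓ
    have hne : vl ≠ [] := by
      rintro rfl
      exact w.2 hw.symm
    exact ⟨⟨vl, hne⟩, ⟨Subtype.ext hw, es', none, rfl, hrun'⟩, rfl⟩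

lemma valComp_letterWeight [Zero M] (val : List ((M × M) × ℝ≥0) → M)
    {w : TimedWord S} {v : TimedWord W.EdgeAlphabet}
    (hv : v ∈ {v | mapTimedWord W.letterLabel v = w} ∩ W.edgeAutomaton.Lang) :
    valComp val W.letterWeight v = val (W.runWord w.1 (W.decodeRun v.1)) := by
  obtain ⟨rfl, hv⟩ := hv
  exact congrArg val (W.runWord_decode v.1 (W.decode_of_mem_edgeAutomaton_lang hv).2).symm

end WTA

theorem recognizable_subset_nivat_seq_general {S M : Type} [Nonempty S]
    [AddCommMonoid M] (val : List ((M × M) × ℝ≥0) → M)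
    (r : TimedWord S → M) (hr : QTLRecognizable val r) :
    NivatMem val (fun {_} T => T.Sequential) r := by
  obtain ⟨W, hW⟩ := hr
  have := W.finE.to_subtype
  refine ⟨W.EdgeAlphabet, inferInstance, ⟨none⟩, W.letterLabel, W.letterWeight, W.edgeAutomaton.Lang,
    ⟨W.edgeAutomaton, W.edgeAutomaton_sequential, rfl⟩, fun w => ?_⟩
  rw [← hW w, pushQTL, finsum_mem_interQTL]
  exact (finsum_mem_eq_of_bijOn _ (W.bijOn_decodeRun w) fun v hv =>
    W.valComp_letterWeight val hv).symm

/-- Lemma: `Rec(Σ,𝕄) ⊆ N^Seq(Σ,𝕄)`. Every recognizable quantitative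
timed language over `Σ` and a timed valuation monoid `𝕄` can be written as
`h((val ∘ g) ∩ 𝓛)` with `𝓛` sequentially recognizable. -/
theorem recognizable_subset_nivat_seq {S M : Type} [Finite S] [Nonempty S]
    [AddCommMonoid M] (val : List ((M × M) × ℝ≥0) → M)
    (r : TimedWord S → M) (hr : QTLRecognizable val r) :
    NivatMem val (fun {_} T => T.Sequential) r :=
  recognizable_subset_nivat_seq_general val r hr
end

section
/- Let Σ be an alphabet and 𝕄 = (M,+,val,𝟘) an idempotent timed valuation monoid. Then Rec(Σ,𝕄) = N(Σ,𝕄). -/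
open scoped NNReal Classical

open scoped NNReal Classical

lemma nsmul_idem {M : Type} [AddMonoid M] (hidem : ∀ m : M, m + m = m) :
    ∀ n : ℕ, n ≠ 0 → ∀ m : M, n • m = m := by
  intro n hn m
  induction n with
  | zero => exact absurd rfl hn
  | succ k ih =>
    rcases Nat.eq_zero_or_pos k with hk | hk
    · subst hk; simp
    · rw [succ_nsmul, ih hk.ne']
      exact hidem m

lemma finsum_fiber {α β M : Type} [AddCommMonoid M] (hidem : ∀ m : M, m + m = m)
    {s : Set α} {t : Set β} (hs : s.Finite) (ht : t.Finite) (π : α → β)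
    (hmaps : ∀ x ∈ s, π x ∈ t) (f : α → M) (c d : β → M)
    (hconst : ∀ x ∈ s, f x = c (π x))
    (hne : ∀ y ∈ t, (∃ x ∈ s, π x = y) → d y = c y)
    (hemp : ∀ y ∈ t, (¬ ∃ x ∈ s, π x = y) → d y = 0) :
    ∑ᶠ x ∈ s, f x = ∑ᶠ y ∈ t, d y := by
  rw [← hs.coe_toFinset, finsum_mem_coe_finset, ← ht.coe_toFinset, finsum_mem_coe_finset]
  rw [← Finset.sum_fiberwise_of_maps_to (t := ht.toFinset) (g := π)
    (fun x hx => ht.mem_toFinset.mpr (hmaps x (hs.mem_toFinset.mp hx))) f]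
  refine Finset.sum_congr rfl (fun y hy => ?_)
  have hyt : y ∈ t := ht.mem_toFinset.mp hy
  by_cases hex : ∃ x ∈ s, π x = y
  · rw [hne y hyt hex]
    have h1 : ∀ x ∈ Finset.filter (fun x => π x = y) hs.toFinset, f x = c y := by
      intro x hx
      rw [Finset.mem_filter] at hx
      rw [hconst x (hs.mem_toFinset.mp hx.1), hx.2]
    rw [Finset.sum_congr rfl h1, Finset.sum_const]
    apply nsmul_idem hidem
    obtain ⟨x, hxs, hπ⟩ := hex
    have : x ∈ Finset.filter (fun x => π x = y) hs.toFinset :=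
      Finset.mem_filter.mpr ⟨hs.mem_toFinset.mpr hxs, hπ⟩
    exact Finset.card_ne_zero_of_mem this
  · rw [hemp y hyt hex]
    have : Finset.filter (fun x => π x = y) hs.toFinset = ∅ := by
      apply Finset.filter_eq_empty_iff.mpr
      intro x hx hπ
      exact hex ⟨x, hs.mem_toFinset.mp hx, hπ⟩
    rw [this, Finset.sum_empty]

lemma finite_lists {α : Type} {s : Set α} (hs : s.Finite) :
    ∀ n : ℕ, {l : List α | l.length = n ∧ ∀ x ∈ l, x ∈ s}.Finite := by
  intro n
  induction n with
  | zero =>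
    apply Set.Finite.subset (Set.finite_singleton ([] : List α))
    intro l hl
    simp only [Set.mem_setOf_eq, List.length_eq_zero_iff] at hl
    simp [hl.1]
  | succ k ih =>
    apply Set.Finite.subset ((hs.prod ih).image (fun p : α × List α => p.1 :: p.2))
    rintro (_ | ⟨x, l⟩) hl
    · simp at hl
    · obtain ⟨hlen, hmem⟩ := hl
      exact ⟨(x, l), ⟨hmem x (by simp), Nat.succ_injective hlen,
        fun y hy => hmem y (by simp [hy])⟩, rfl⟩

lemma list_pair_ext {α β : Type} : ∀ (l₁ l₂ : List (α × β)),
    l₁.map Prod.fst = l₂.map Prod.fst → l₁.map Prod.snd = l₂.map Prod.snd → l₁ = l₂ := by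
  intro l₁
  induction l₁ with
  | nil => intro l₂ h1 _; cases l₂ <;> simp_all
  | cons p l ih =>
    intro l₂ h1 h2
    cases l₂ with
    | nil => simp at h1
    | cons q l' =>
      simp only [List.map_cons, List.cons.injEq] at h1 h2
      rw [ih l' h1.2 h2.2, Prod.ext h1.1 h2.1]

section Forward
variable {S M : Type} [Nonempty S] [AddCommMonoid M]

/-- Label map from actual edges to the auxiliary alphabet. -/
noncomputable def fwdLab (W : WTA S M) (e : Edge W.L S W.C) : Option ↥W.E :=
  if he : e ∈ W.E then some ⟨e, he⟩ else none

/-- The renaming `h`. -/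
noncomputable def fwdH (W : WTA S M) : Option ↥W.E → S :=
  fun γ => γ.elim (Classical.arbitrary S) (fun e => e.1.label)

/-- The weight map `g`. -/
def fwdG (W : WTA S M) : Option ↥W.E → M × M :=
  fun γ => γ.elim (0, 0) (fun e => (W.wtL e.1.src, W.wtE e.1))

/-- The auxiliary timed automaton over the alphabet of edges. -/
noncomputable def fwdT (W : WTA S M) : TimedAutomaton (Option ↥W.E) where
  L := W.L
  C := W.C
  finL := W.finL
  finC := W.finC
  I := W.I
  F := W.F
  E := Set.range (fun e : ↥W.E => ⟨e.1.src, some e, e.1.guard, e.1.reset, e.1.dst⟩)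
  finE := by haveI := W.finE.to_subtype; exact Set.finite_range _

noncomputable def fwdProj (W : WTA S M) (ed : Edge W.L (Option ↥W.E) W.C) :
    Edge W.L S W.C :=
  ⟨ed.src, fwdH W ed.label, ed.guard, ed.reset, ed.dst⟩

lemma fwd_run1 (W : WTA S M) : ∀ (u : List (S × ℝ≥0)) (es : List (Edge W.L S W.C))
    (ℓ : W.L) (ν : ClockVal W.C), W.IsRunFrom ℓ ν u es →
    es.length = u.length ∧ (∀ e ∈ es, e ∈ W.E) ∧
    List.zipWith (fun (p : S × ℝ≥0) e => (fwdH W (fwdLab W e), p.2)) u es = u ∧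
    (fwdT W).IsRunFrom ℓ ν (List.zipWith (fun (p : S × ℝ≥0) e => (fwdLab W e, p.2)) u es)
      (es.map (fun e => ⟨e.src, fwdLab W e, e.guard, e.reset, e.dst⟩)) ∧
    W.runWord u es =
      (List.zipWith (fun (p : S × ℝ≥0) e => (fwdLab W e, p.2)) u es).map
        (fun q => (fwdG W q.1, q.2)) := by
  intro u
  induction u with
  | nil =>
    intro es ℓ ν hrun
    cases es with
    | nil => exact ⟨rfl, by simp, rfl, hrun, rfl⟩
    | cons e es => exact absurd hrun (by simp [TimedAutomaton.IsRunFrom])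
  | cons p u ih =>
    intro es ℓ ν hrun
    cases es with
    | nil => exact absurd hrun (by simp [TimedAutomaton.IsRunFrom])
    | cons e es =>
      obtain ⟨a, t⟩ := p
      obtain ⟨he, hsrc, hlab, hsat, hrest⟩ := hrun
      obtain ⟨ih1, ih2, ih3, ih4, ih5⟩ := ih es e.dst _ hrest
      have hlabe : fwdLab W e = some ⟨e, he⟩ := dif_pos he
      refine ⟨by simp [ih1], ?_, ?_, ?_, ?_⟩
      · intro e' he'
        rw [List.mem_cons] at he'
        rcases he' with he' | he'
        · exact he' ▸ he
        · exact ih2 e' he'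
      · simp only [List.zipWith_cons_cons, ih3, hlabe]
        rw [show fwdH W (some ⟨e, he⟩) = e.label from rfl, hlab]
      · refine ⟨?_, hsrc, rfl, hsat, ih4⟩
        show Edge.mk e.src (fwdLab W e) e.guard e.reset e.dst ∈ (fwdT W).E
        rw [hlabe]
        exact ⟨⟨e, he⟩, rfl⟩
      · simp only [WTA.runWord, List.zipWith_cons_cons, List.map_cons] at *
        rw [ih5, hlabe]
        rfl

lemma fwd_run2 (W : WTA S M) : ∀ (v : List ((Option ↥W.E) × ℝ≥0))
    (es' : List (Edge W.L (Option ↥W.E) W.C)) (ℓ : W.L) (ν : ClockVal W.C),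
    (fwdT W).IsRunFrom ℓ ν v es' →
    W.IsRunFrom ℓ ν (v.map (fun q => (fwdH W q.1, q.2))) (es'.map (fwdProj W)) ∧
    List.zipWith (fun (p : S × ℝ≥0) e => (fwdLab W e, p.2))
      (v.map (fun q => (fwdH W q.1, q.2))) (es'.map (fwdProj W)) = v := by
  intro v
  induction v with
  | nil =>
    intro es' ℓ ν hrun
    cases es' with
    | nil => exact ⟨hrun, rfl⟩
    | cons e es => exact absurd hrun (by simp [TimedAutomaton.IsRunFrom])
  | cons q v ih =>
    intro es' ℓ ν hrun
    cases es' with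
    | nil => exact absurd hrun (by simp [TimedAutomaton.IsRunFrom])
    | cons ed es =>
      obtain ⟨γ, t⟩ := q
      obtain ⟨hed, hsrc, hlab, hsat, hrest⟩ := hrun
      obtain ⟨x, hx⟩ := hed
      obtain ⟨ih1, ih2⟩ := ih es ed.dst _ hrest
      subst hx
      -- now ed is literally the mk; γ = some x from hlab
      refine ⟨⟨x.2, hsrc, ?_, hsat, ?_⟩, ?_⟩
      · rw [← hlab]; rfl
      · exact ih1
      · simp only [List.map_cons, List.zipWith_cons_cons, ih2, List.cons.injEq]
        refine ⟨?_, trivial⟩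
        have : fwdProj W (⟨x.1.src, some x, x.1.guard, x.1.reset, x.1.dst⟩ :
            Edge W.L (Option ↥W.E) W.C) = x.1 := rfl
        rw [this, ← hlab]
        simp [fwdLab, x.2]

theorem fwd_main {S M : Type} [Finite S] [Nonempty S] [AddCommMonoid M]
    (val : List ((M × M) × ℝ≥0) → M) (hidem : IsIdempotent M) (𝕃 : TimedWord S → M)
    (hrec : QTLRecognizable val 𝕃) : NivatMem val (fun {_} _ => True) 𝕃 := by
  obtain ⟨W, hW⟩ := hrec
  haveI := W.finE.to_subtype
  haveI := Fintype.ofFinite ↥W.E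
  haveI : Finite (Option ↥W.E) := inferInstance
  refine ⟨Option ↥W.E, inferInstance, inferInstance, fwdH W, fwdG W, (fwdT W).Lang,
    ⟨fwdT W, trivial, rfl⟩, ?_⟩
  intro w
  rw [← hW w]
  have hsfin : (W.toTimedAutomaton.RunOn w).Finite := by
    apply Set.Finite.subset (finite_lists W.finE w.1.length)
    rintro es ⟨ℓ₀, hI, hrun⟩
    obtain ⟨h1, h2, -, -, -⟩ := fwd_run1 W w.1 es ℓ₀ _ hrun
    exact ⟨h1, h2⟩
  have hsnd : ∀ v : TimedWord (Option ↥W.E), mapTimedWord (fwdH W) v = w →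
      v.1.map Prod.snd = w.1.map Prod.snd := by
    intro v hv
    have hv1 : v.1.map (fun q => (fwdH W q.1, q.2)) = w.1 := congrArg Subtype.val hv
    rw [← hv1, List.map_map]
    rfl
  have htfin : {v : TimedWord (Option ↥W.E) | mapTimedWord (fwdH W) v = w}.Finite := by
    apply Set.Finite.of_finite_image (f := fun v => v.1.map Prod.fst)
    · apply Set.Finite.subset (finite_lists Set.finite_univ w.1.length)
      rintro l ⟨v, hv, rfl⟩
      have hv1 : v.1.map (fun q => (fwdH W q.1, q.2)) = w.1 := congrArg Subtype.val hv
      refine ⟨?_, fun x _ => Set.mem_univ x⟩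
      rw [List.length_map, ← hv1, List.length_map]
    · intro v hv v' hv' hf
      apply Subtype.ext
      apply list_pair_ext _ _ hf
      rw [hsnd v hv, hsnd v' hv']
  unfold WTA.behavior pushQTL
  refine finsum_fiber hidem hsfin htfin
    (fun es => if hz : (List.zipWith (fun (p : S × ℝ≥0) e => (fwdLab W e, p.2)) w.1 es) = []
      then ⟨[(none, 0)], by simp⟩ else ⟨_, hz⟩) ?_ _ (valComp val (fwdG W)) _ ?_ ?_ ?_
  · -- hmaps
    rintro es ⟨ℓ₀, hI, hrun⟩
    obtain ⟨h1, -, h3, -, -⟩ := fwd_run1 W w.1 es ℓ₀ _ hrun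
    have hes : es ≠ [] := by
      intro hh
      subst hh
      exact w.2 (List.length_eq_zero_iff.mp (h1.symm.trans rfl))
    have hz : (List.zipWith (fun (p : S × ℝ≥0) e => (fwdLab W e, p.2)) w.1 es) ≠ [] := by
      rw [Ne, List.zipWith_eq_nil_iff]
      push_neg
      exact ⟨w.2, hes⟩
    simp only [Set.mem_setOf_eq, dif_neg hz]
    apply Subtype.ext
    show (List.zipWith (fun (p : S × ℝ≥0) e => (fwdLab W e, p.2)) w.1 es).map
      (fun q => (fwdH W q.1, q.2)) = w.1
    rw [List.map_zipWith]
    exact h3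
  · -- hconst
    rintro es ⟨ℓ₀, hI, hrun⟩
    obtain ⟨h1, -, -, -, h5⟩ := fwd_run1 W w.1 es ℓ₀ _ hrun
    have hes : es ≠ [] := by
      intro hh
      subst hh
      exact w.2 (List.length_eq_zero_iff.mp (h1.symm.trans rfl))
    have hz : (List.zipWith (fun (p : S × ℝ≥0) e => (fwdLab W e, p.2)) w.1 es) ≠ [] := by
      rw [Ne, List.zipWith_eq_nil_iff]
      push_neg
      exact ⟨w.2, hes⟩
    simp only [dif_neg hz]
    unfold valComp
    exact congrArg val h5
  · -- hne
    rintro v hv ⟨es, ⟨ℓ₀, hI, hrun⟩, hπes⟩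
    obtain ⟨h1, -, -, h4, -⟩ := fwd_run1 W w.1 es ℓ₀ _ hrun
    have hes : es ≠ [] := by
      intro hh
      subst hh
      exact w.2 (List.length_eq_zero_iff.mp (h1.symm.trans rfl))
    have hz : (List.zipWith (fun (p : S × ℝ≥0) e => (fwdLab W e, p.2)) w.1 es) ≠ [] := by
      rw [Ne, List.zipWith_eq_nil_iff]
      push_neg
      exact ⟨w.2, hes⟩
    simp only [dif_neg hz] at hπes
    unfold interQTL
    rw [if_pos]
    show (fwdT W).RunOn v |>.Nonempty
    refine ⟨es.map (fun e => ⟨e.src, fwdLab W e, e.guard, e.reset, e.dst⟩), ℓ₀, hI, ?_⟩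
    have hv1 : v.1 = List.zipWith (fun (p : S × ℝ≥0) e => (fwdLab W e, p.2)) w.1 es := by
      rw [← hπes]
    rw [hv1]
    exact h4
  · -- hemp
    rintro v hv hnex
    unfold interQTL
    rw [if_neg]
    intro hvL
    obtain ⟨es', ℓ₀, hI, hrun⟩ := hvL
    obtain ⟨hr1, hr2⟩ := fwd_run2 W v.1 es' ℓ₀ _ hrun
    have hv1 : v.1.map (fun q => (fwdH W q.1, q.2)) = w.1 := congrArg Subtype.val hv
    apply hnex
    refine ⟨es'.map (fwdProj W), ⟨ℓ₀, hI, ?_⟩, ?_⟩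
    · rw [← hv1]
      exact hr1
    · rw [hv1] at hr2
      have hz : (List.zipWith (fun (p : S × ℝ≥0) e => (fwdLab W e, p.2)) w.1
          (es'.map (fwdProj W))) ≠ [] := by
        rw [hr2]
        exact v.2
      simp only [dif_neg hz]
      exact Subtype.ext hr2

end Forward

section Backward
variable {S M Γ : Type} [AddCommMonoid M]

/-- The WTA guessing the next letter of `Γ`. -/
noncomputable def bwdW [Finite Γ] (h : Γ → S) (g : Γ → M × M) (T : TimedAutomaton Γ) :
    WTA S M where
  L := T.L × Γ
  C := T.C
  finL := by haveI := T.finL; exact inferInstance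
  finC := T.finC
  I := T.I ×ˢ Set.univ
  F := T.F ×ˢ Set.univ
  E := Set.range (fun p : ↥T.E × Γ =>
    ⟨(p.1.1.src, p.1.1.label), h p.1.1.label, p.1.1.guard, p.1.1.reset, (p.1.1.dst, p.2)⟩)
  finE := by
    haveI := T.finE.to_subtype
    haveI := Fintype.ofFinite ↥T.E
    exact Set.finite_range _
  wtL := fun ℓ => (g ℓ.2).1
  wtE := fun ed => (g ed.src.2).2

def guessOf (γf : Γ) : List (Γ × ℝ≥0) → Γ
  | [] => γf
  | (γ, _) :: _ => γ

def liftRun {L C : Type} (h : Γ → S) (γf : Γ) :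
    List (Γ × ℝ≥0) → List (Edge L Γ C) → List (Edge (L × Γ) S C)
  | [], _ => []
  | _ :: _, [] => []
  | (γ, _) :: v, e :: es =>
      ⟨(e.src, γ), h γ, e.guard, e.reset, (e.dst, guessOf γf v)⟩ :: liftRun h γf v es

lemma bwd_run1 [Finite Γ] (h : Γ → S) (g : Γ → M × M) (T : TimedAutomaton Γ) :
    ∀ (u : List (S × ℝ≥0)) (es : List (Edge (T.L × Γ) S T.C))
      (ℓγ : T.L × Γ) (ν : ClockVal T.C),
    (bwdW h g T).IsRunFrom ℓγ ν u es →
    es.length = u.length ∧ (∀ e ∈ es, e ∈ (bwdW h g T).E) ∧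
    List.zipWith (fun (p : S × ℝ≥0) ed => (h ed.src.2, p.2)) u es = u ∧
    T.IsRunFrom ℓγ.1 ν (List.zipWith (fun (p : S × ℝ≥0) ed => (ed.src.2, p.2)) u es)
      (es.map (fun ed => ⟨ed.src.1, ed.src.2, ed.guard, ed.reset, ed.dst.1⟩)) := by
  intro u
  induction u with
  | nil =>
    intro es ℓγ ν hrun
    cases es with
    | nil => exact ⟨rfl, by simp, rfl, hrun.1⟩
    | cons e es => exact absurd hrun (by simp [TimedAutomaton.IsRunFrom])
  | cons p u ih =>
    intro es ℓγ ν hrun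
    cases es with
    | nil => exact absurd hrun (by simp [TimedAutomaton.IsRunFrom])
    | cons ed es =>
      obtain ⟨a, t⟩ := p
      obtain ⟨hed, hsrc, hlab, hsat, hrest⟩ := hrun
      obtain ⟨⟨e, γ'⟩, rfl⟩ := hed
      obtain ⟨ih1, ih2, ih3, ih4⟩ := ih es _ _ hrest
      refine ⟨by simp [ih1], ?_, ?_, e.2, congrArg Prod.fst hsrc, rfl, hsat, ih4⟩
      · intro e' he'
        rw [List.mem_cons] at he'
        rcases he' with he' | he'
        · exact he' ▸ ⟨⟨e, γ'⟩, rfl⟩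
        · exact ih2 e' he'
      · simp only [List.zipWith_cons_cons, ih3]
        exact congrArg (fun b => (b, t) :: u) hlab

lemma bwd_runWord [Finite Γ] (h : Γ → S) (g : Γ → M × M) (T : TimedAutomaton Γ) :
    ∀ (u : List (S × ℝ≥0)) (es : List (Edge (T.L × Γ) S T.C)),
    (bwdW h g T).runWord u es =
      (List.zipWith (fun (p : S × ℝ≥0) ed => (ed.src.2, p.2)) u es).map
        (fun q => (g q.1, q.2)) := by
  intro u es
  rw [List.map_zipWith]
  rfl

lemma bwd_run2 [Finite Γ] (h : Γ → S) (g : Γ → M × M) (T : TimedAutomaton Γ) :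
    ∀ (v : List (Γ × ℝ≥0)) (es : List (Edge T.L Γ T.C)) (ℓ : T.L) (ν : ClockVal T.C),
    T.IsRunFrom ℓ ν v es → ∀ γf : Γ,
    (bwdW h g T).IsRunFrom (ℓ, guessOf γf v) ν (v.map (fun q => (h q.1, q.2)))
      (liftRun h γf v es) ∧
    List.zipWith (fun (p : S × ℝ≥0) ed => (ed.src.2, p.2))
      (v.map (fun q => (h q.1, q.2))) (liftRun h γf v es) = v := by
  intro v
  induction v with
  | nil =>
    intro es ℓ ν hrun γf
    cases es with
    | nil => exact ⟨⟨hrun, Set.mem_univ _⟩, rfl⟩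
    | cons e es => exact absurd hrun (by simp [TimedAutomaton.IsRunFrom])
  | cons q v ih =>
    intro es ℓ ν hrun γf
    cases es with
    | nil => exact absurd hrun (by simp [TimedAutomaton.IsRunFrom])
    | cons e es =>
      obtain ⟨γ, t⟩ := q
      obtain ⟨he, hsrc, hlab, hsat, hrest⟩ := hrun
      obtain ⟨ih1, ih2⟩ := ih es _ _ hrest γf
      refine ⟨⟨⟨(⟨e, he⟩, guessOf γf v), by subst hlab; rfl⟩, by subst hsrc; rfl, rfl, hsat, ih1⟩, ?_⟩
      simp only [List.map_cons, liftRun, List.zipWith_cons_cons, ih2]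

theorem bwd_main {S M : Type} [Finite S] [Nonempty S] [AddCommMonoid M]
    (val : List ((M × M) × ℝ≥0) → M) (hidem : IsIdempotent M) (𝕃 : TimedWord S → M)
    (hn : NivatMem val (fun {_} _ => True) 𝕃) : QTLRecognizable val 𝕃 := by
  obtain ⟨Γ, finΓ, neΓ, h, g, 𝓛, ⟨T, -, hTL⟩, heq⟩ := hn
  haveI := finΓ
  haveI := neΓ
  subst hTL
  refine ⟨bwdW h g T, fun w => ?_⟩
  rw [heq w]
  have hsfin : ((bwdW h g T).toTimedAutomaton.RunOn w).Finite := by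
    apply Set.Finite.subset (finite_lists (bwdW h g T).finE w.1.length)
    rintro es ⟨ℓγ₀, hI, hrun⟩
    obtain ⟨h1, h2, -, -⟩ := bwd_run1 h g T w.1 es ℓγ₀ _ hrun
    exact ⟨h1, h2⟩
  have hsnd : ∀ v : TimedWord Γ, mapTimedWord h v = w →
      v.1.map Prod.snd = w.1.map Prod.snd := by
    intro v hv
    have hv1 : v.1.map (fun q => (h q.1, q.2)) = w.1 := congrArg Subtype.val hv
    rw [← hv1, List.map_map]
    rfl
  have htfin : {v : TimedWord Γ | mapTimedWord h v = w}.Finite := by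
    apply Set.Finite.of_finite_image (f := fun v => v.1.map Prod.fst)
    · apply Set.Finite.subset (finite_lists Set.finite_univ w.1.length)
      rintro l ⟨v, hv, rfl⟩
      have hv1 : v.1.map (fun q => (h q.1, q.2)) = w.1 := congrArg Subtype.val hv
      refine ⟨?_, fun x _ => Set.mem_univ x⟩
      rw [List.length_map, ← hv1, List.length_map]
    · intro v hv v' hv' hf
      apply Subtype.ext
      apply list_pair_ext _ _ hf
      rw [hsnd v hv, hsnd v' hv']
  unfold WTA.behavior pushQTL
  refine finsum_fiber hidem hsfin htfin
    (fun es => if hz : (List.zipWith (fun (p : S × ℝ≥0) ed => (ed.src.2, p.2)) w.1 es) = []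
      then ⟨[(Classical.arbitrary Γ, 0)], by simp⟩ else ⟨_, hz⟩)
    ?_ _ (valComp val g) _ ?_ ?_ ?_
  · -- hmaps
    rintro es ⟨ℓγ₀, hI, hrun⟩
    obtain ⟨h1, -, h3, -⟩ := bwd_run1 h g T w.1 es ℓγ₀ _ hrun
    have hes : es ≠ [] := by
      intro hh
      subst hh
      exact w.2 (List.length_eq_zero_iff.mp (h1.symm.trans rfl))
    have hz : (List.zipWith (fun (p : S × ℝ≥0) ed => (ed.src.2, p.2)) w.1 es) ≠ [] := by
      rw [Ne, List.zipWith_eq_nil_iff]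
      push_neg
      exact ⟨w.2, hes⟩
    simp only [Set.mem_setOf_eq, dif_neg hz]
    apply Subtype.ext
    show (List.zipWith (fun (p : S × ℝ≥0) ed => (ed.src.2, p.2)) w.1 es).map
      (fun q => (h q.1, q.2)) = w.1
    rw [List.map_zipWith]
    exact h3
  · -- hconst
    rintro es ⟨ℓγ₀, hI, hrun⟩
    obtain ⟨h1, -, -, -⟩ := bwd_run1 h g T w.1 es ℓγ₀ _ hrun
    have hes : es ≠ [] := by
      intro hh
      subst hh
      exact w.2 (List.length_eq_zero_iff.mp (h1.symm.trans rfl))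
    have hz : (List.zipWith (fun (p : S × ℝ≥0) ed => (ed.src.2, p.2)) w.1 es) ≠ [] := by
      rw [Ne, List.zipWith_eq_nil_iff]
      push_neg
      exact ⟨w.2, hes⟩
    simp only [dif_neg hz]
    unfold valComp
    exact congrArg val (bwd_runWord h g T w.1 es)
  · -- hne
    rintro v hv ⟨es, ⟨ℓγ₀, hI, hrun⟩, hπes⟩
    obtain ⟨h1, -, -, h4⟩ := bwd_run1 h g T w.1 es ℓγ₀ _ hrun
    have hes : es ≠ [] := by
      intro hh
      subst hh
      exact w.2 (List.length_eq_zero_iff.mp (h1.symm.trans rfl))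
    have hz : (List.zipWith (fun (p : S × ℝ≥0) ed => (ed.src.2, p.2)) w.1 es) ≠ [] := by
      rw [Ne, List.zipWith_eq_nil_iff]
      push_neg
      exact ⟨w.2, hes⟩
    simp only [dif_neg hz] at hπes
    unfold interQTL
    rw [if_pos]
    refine ⟨es.map (fun ed => ⟨ed.src.1, ed.src.2, ed.guard, ed.reset, ed.dst.1⟩),
      ℓγ₀.1, hI.1, ?_⟩
    have hv1 : v.1 = List.zipWith (fun (p : S × ℝ≥0) ed => (ed.src.2, p.2)) w.1 es := by
      rw [← hπes]
    rw [hv1]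
    exact h4
  · -- hemp
    rintro v hv hnex
    unfold interQTL
    rw [if_neg]
    intro hvL
    obtain ⟨esT, ℓ₀, hI, hrunT⟩ := hvL
    obtain ⟨hr1, hr2⟩ := bwd_run2 h g T v.1 esT ℓ₀ _ hrunT (Classical.arbitrary Γ)
    have hv1 : v.1.map (fun q => (h q.1, q.2)) = w.1 := congrArg Subtype.val hv
    apply hnex
    refine ⟨liftRun h (Classical.arbitrary Γ) v.1 esT,
      ⟨(ℓ₀, guessOf (Classical.arbitrary Γ) v.1), ⟨hI, Set.mem_univ _⟩, ?_⟩, ?_⟩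
    · rw [← hv1]
      exact hr1
    · rw [hv1] at hr2
      have hz : (List.zipWith (fun (p : S × ℝ≥0) ed => (ed.src.2, p.2)) w.1
          (liftRun h (Classical.arbitrary Γ) v.1 esT)) ≠ [] := by
        rw [hr2]
        exact v.2
      refine Subtype.ext ?_
      beta_reduce
      split
      · exact absurd ‹_› hz
      · exact hr2

end Backward


/-- If `𝕄` is an idempotent timed valuation monoid, then
`Rec(Σ,𝕄) = N(Σ,𝕄)`. -/
theorem nivat_theorem_idempotent {S M : Type} [Finite S] [Nonempty S]
    [AddCommMonoid M] (val : List ((M × M) × ℝ≥0) → M) (hidem : IsIdempotent M) :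
    ∀ 𝕃 : TimedWord S → M,
      QTLRecognizable val 𝕃 ↔ NivatMem val (fun {_} _ => True) 𝕃 := by
  intro 𝕃
  exact ⟨fwd_main val hidem 𝕃, bwd_main val hidem 𝕃⟩
end

section
/- Let Σ be an alphabet and 𝕄 = (M,+,val,𝟘) a location-independent timed valuation monoid. Then H^Seq(Σ,𝕄) = Rec(Σ,𝕄). -/
open scoped NNReal Classical

/-!
Both inclusions are run-preserving automaton constructions. Given a WTA `W` over `Γ` and
`h : Γ → Σ`, relabelling every edge by `h` (and remembering the last letter read in the
location) gives a WTA over `Σ` whose runs on `w` are in bijection with the pairs `(v, ρ)` of a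
preimage `v` of `w` and a run `ρ` of `W` on `v`, with the same weights; so `h(‖W‖)` is
recognizable. Conversely, a WTA `W` over `Σ` is simulated by the automaton that reads the edges
of `W` as letters: a letter names the edge to take, so that automaton is sequential (after
adding a fresh initial location), and `h` maps an edge to its label. Its runs carry the edge
weights of `W` but not its location weights, which is harmless exactly because `val` is
location-independent.
-/

theorem List.eq_of_map_fst_eq_of_map_snd_eq {α β : Type*} {l₁ l₂ : List (α × β)}
    (hfst : l₁.map Prod.fst = l₂.map Prod.fst) (hsnd : l₁.map Prod.snd = l₂.map Prod.snd) :
    l₁ = l₂ := by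
  rw [← List.zip_unzip l₁, ← List.zip_unzip l₂]
  simp only [List.unzip_fst, List.unzip_snd, hfst, hsnd]

theorem Set.Finite.setOf_length_eq_forall_mem {β : Type*} {s : Set β} (hs : s.Finite) (n : ℕ) :
    {l : List β | l.length = n ∧ ∀ x ∈ l, x ∈ s}.Finite := by
  have := hs.to_subtype
  refine ((List.finite_length_eq s n).image (List.map Subtype.val)).subset ?_
  rintro l ⟨hl, hmem⟩
  exact ⟨l.pmap Subtype.mk hmem, by simpa using hl, by simp [List.map_pmap]⟩

theorem finsum_mem_finsum_mem_eq_finsum_mem_prod {α β M : Type*} [AddCommMonoid M]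
    {s : Set α} {t : α → Set β} (hs : s.Finite) (ht : ∀ a ∈ s, (t a).Finite) (f : α → β → M) :
    ∑ᶠ a ∈ s, ∑ᶠ b ∈ t a, f a b = ∑ᶠ p ∈ {p : α × β | p.1 ∈ s ∧ p.2 ∈ t p.1}, f p.1 p.2 := by
  have hunion : {p : α × β | p.1 ∈ s ∧ p.2 ∈ t p.1} = ⋃ a ∈ s, Prod.mk a '' t a := by
    ext ⟨a, b⟩
    simp [and_comm]
  have hdisj : s.PairwiseDisjoint fun a => Prod.mk a '' t a := fun _ _ _ _ hne =>
    Set.disjoint_left.mpr fun _ ⟨_, _, hp⟩ ⟨_, _, hp'⟩ =>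
      hne (congrArg Prod.fst (hp.trans hp'.symm))
  rw [hunion, finsum_mem_biUnion hdisj hs fun a ha => (ht a ha).image _]
  refine finsum_mem_congr rfl fun a _ => ?_
  rw [finsum_mem_image (Prod.mk_right_injective a).injOn]

namespace TimedAutomaton.IsRunFrom

variable {A : Type} {T : TimedAutomaton A}

theorem map_label {ℓ : T.L} {ν : ClockVal T.C} {w : List (A × ℝ≥0)}
    {es : List (Edge T.L A T.C)} (hrun : T.IsRunFrom ℓ ν w es) :
    es.map Edge.label = w.map Prod.fst := by
  induction w generalizing ℓ ν es with
  | nil => cases es with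
    | nil => rfl
    | cons e es => exact hrun.elim
  | cons p w ih => cases es with
    | nil => exact hrun.elim
    | cons e es => exact congrArg₂ _ hrun.2.2.1 (ih hrun.2.2.2.2)

theorem mem_E {ℓ : T.L} {ν : ClockVal T.C} {w : List (A × ℝ≥0)}
    {es : List (Edge T.L A T.C)} (hrun : T.IsRunFrom ℓ ν w es) : ∀ e ∈ es, e ∈ T.E := by
  induction w generalizing ℓ ν es with
  | nil => cases es with
    | nil => simp
    | cons e es => exact hrun.elim
  | cons p w ih => cases es with
    | nil => exact hrun.elim
    | cons e es => exact List.forall_mem_cons.mpr ⟨hrun.1, ih hrun.2.2.2.2⟩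

end TimedAutomaton.IsRunFrom

theorem length_eq_of_mapTimedWord_eq {Γ A : Type} {h : Γ → A} {v : TimedWord Γ}
    {w : TimedWord A} (hv : mapTimedWord h v = w) : v.1.length = w.1.length := by
  rw [← hv]
  simp [mapTimedWord]

theorem eq_of_map_fst_eq_of_mapTimedWord_eq {Γ A : Type} {h : Γ → A} {v₁ v₂ : TimedWord Γ}
    (hfst : v₁.1.map Prod.fst = v₂.1.map Prod.fst)
    (hmap : mapTimedWord h v₁ = mapTimedWord h v₂) : v₁ = v₂ := by
  refine Subtype.ext (List.eq_of_map_fst_eq_of_map_snd_eq hfst ?_)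
  simpa [mapTimedWord, Function.comp_def] using congrArg (·.1.map Prod.snd) hmap

theorem finite_setOf_mapTimedWord_eq {Γ A : Type} [Finite Γ] (h : Γ → A) (w : TimedWord A) :
    {v : TimedWord Γ | mapTimedWord h v = w}.Finite := by
  refine Set.Finite.of_finite_image (f := fun v => v.1.map Prod.fst) ?_ fun v₁ hv₁ v₂ hv₂ hfst =>
    eq_of_map_fst_eq_of_mapTimedWord_eq hfst (hv₁.trans hv₂.symm)
  refine (List.finite_length_eq Γ w.1.length).subset ?_
  rintro _ ⟨v, hv, rfl⟩
  simpa using length_eq_of_mapTimedWord_eq hv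

namespace TimedAutomaton

variable {Γ A : Type}

theorem finite_runOn (T : TimedAutomaton A) (w : TimedWord A) : (T.RunOn w).Finite := by
  refine (T.finE.setOf_length_eq_forall_mem w.1.length).subset ?_
  rintro es ⟨_, -, hrun⟩
  exact ⟨by simpa using congrArg List.length hrun.map_label, hrun.mem_E⟩

def fiberRuns (T : TimedAutomaton Γ) (h : Γ → A) (w : TimedWord A) :
    Set (TimedWord Γ × List (Edge T.L Γ T.C)) :=
  {p | mapTimedWord h p.1 = w ∧ p.2 ∈ T.RunOn p.1}

end TimedAutomaton

namespace WTA

variable {Γ A M : Type}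

section

variable [AddCommMonoid M] (val : List ((M × M) × ℝ≥0) → M)

theorem pushQTL_behavior [Finite Γ] (W : WTA Γ M) (h : Γ → A) (w : TimedWord A) :
    pushQTL h (W.behavior val) w = ∑ᶠ p ∈ W.fiberRuns h w, val (W.runWord p.1.1 p.2) :=
  finsum_mem_finsum_mem_eq_finsum_mem_prod (finite_setOf_mapTimedWord_eq h w)
    (fun v _ => W.finite_runOn v) _

theorem behavior_eq_pushQTL_of_bijOn [Finite Γ] (W' : WTA A M) (W : WTA Γ M) (h : Γ → A)
    (w : TimedWord A) (Ψ : TimedWord Γ × List (Edge W.L Γ W.C) → List (Edge W'.L A W'.C))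
    (hΨ : Set.BijOn Ψ (W.fiberRuns h w) (W'.RunOn w))
    (hwt : ∀ p ∈ W.fiberRuns h w, val (W.runWord p.1.1 p.2) = val (W'.runWord w.1 (Ψ p))) :
    W'.behavior val w = pushQTL h (W.behavior val) w :=
  (W.pushQTL_behavior val h w ▸ finsum_mem_eq_of_bijOn Ψ hΨ hwt).symm

end

/-- The target location remembers the letter just read, so that an edge of `W.relabel h`
determines the edge of `W` it comes from. -/
def relabelEdge (W : WTA Γ M) (h : Γ → A) (o : Option Γ) (e : Edge W.L Γ W.C) :
    Edge (W.L × Option Γ) A W.C :=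
  ⟨(e.src, o), h e.label, e.guard, e.reset, (e.dst, some e.label)⟩

def relabel [Zero M] [Finite Γ] (W : WTA Γ M) (h : Γ → A) : WTA A M where
  L := W.L × Option Γ
  C := W.C
  finL := by have := W.finL; infer_instance
  finC := W.finC
  I := (·, none) '' W.I
  F := Prod.fst ⁻¹' W.F
  E := Set.image2 (W.relabelEdge h) Set.univ W.E
  finE := Set.finite_univ.image2 _ W.finE
  wtL q := W.wtL q.1
  wtE e := e.dst.2.elim 0 fun a => W.wtE ⟨e.src.1, a, e.guard, e.reset, e.dst.1⟩

def relabelRun (W : WTA Γ M) (h : Γ → A) :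
    Option Γ → List (Edge W.L Γ W.C) → List (Edge (W.L × Option Γ) A W.C)
  | _, [] => []
  | o, e :: es => W.relabelEdge h o e :: W.relabelRun h (some e.label) es

theorem relabelEdge_injective (W : WTA Γ M) (h : Γ → A) (o : Option Γ) :
    Function.Injective (W.relabelEdge h o) := by
  rintro ⟨⟩ ⟨⟩ he
  simp_all [relabelEdge]

theorem relabelRun_injective (W : WTA Γ M) (h : Γ → A) :
    ∀ o, Function.Injective (W.relabelRun h o)
  | _, [], [], _ => rfl
  | o, e₁ :: es₁, e₂ :: es₂, he => by
    obtain ⟨he, hes⟩ := List.cons.inj he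
    cases W.relabelEdge_injective h o he
    rw [W.relabelRun_injective h _ hes]

section

variable [Finite Γ] [Zero M]

theorem isRunFrom_relabel (W : WTA Γ M) (h : Γ → A) {ℓ : W.L} {ν : ClockVal W.C}
    {v : List (Γ × ℝ≥0)} {es : List (Edge W.L Γ W.C)} (hrun : W.IsRunFrom ℓ ν v es)
    (o : Option Γ) :
    (W.relabel h).IsRunFrom (ℓ, o) ν (v.map fun p => (h p.1, p.2)) (W.relabelRun h o es) := by
  induction v generalizing ℓ ν es o with
  | nil => cases es with
    | nil => exact hrun
    | cons e es => exact hrun.elim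
  | cons p v ih => cases es with
    | nil => exact hrun.elim
    | cons e es =>
      obtain ⟨he, hsrc, hlabel, hguard, hrest⟩ := hrun
      exact ⟨Set.mem_image2_of_mem trivial he, congrArg (·, o) hsrc, congrArg h hlabel, hguard,
        ih hrest _⟩

theorem exists_isRunFrom_of_isRunFrom_relabel (W : WTA Γ M) (h : Γ → A)
    {q : W.L × Option Γ} {ν : ClockVal W.C} {w : List (A × ℝ≥0)}
    {es' : List (Edge (W.L × Option Γ) A W.C)} (hrun : (W.relabel h).IsRunFrom q ν w es') :
    ∃ v es, W.IsRunFrom q.1 ν v es ∧ v.map (fun p => (h p.1, p.2)) = w ∧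
      W.relabelRun h q.2 es = es' := by
  induction w generalizing q ν es' with
  | nil => cases es' with
    | nil => exact ⟨[], [], hrun, rfl, rfl⟩
    | cons e es => exact hrun.elim
  | cons p w ih => cases es' with
    | nil => exact hrun.elim
    | cons e' es' =>
      obtain ⟨o, -, e, he, rfl⟩ := hrun.1
      obtain ⟨-, hsrc, hlabel, hguard, hrest⟩ := hrun
      obtain ⟨v, es, hrun, hv, hes⟩ := ih hrest
      subst hsrc hes
      exact ⟨(e.label, p.2) :: v, e :: es, ⟨he, rfl, rfl, hguard, hrun⟩,
        congrArg₂ List.cons (congrArg₂ Prod.mk hlabel rfl) hv, rfl⟩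

theorem runWord_relabelRun (W : WTA Γ M) (h : Γ → A) (v : List (Γ × ℝ≥0))
    (es : List (Edge W.L Γ W.C)) (o : Option Γ) :
    (W.relabel h).runWord (v.map fun p => (h p.1, p.2)) (W.relabelRun h o es) =
      W.runWord v es := by
  induction es generalizing v o with
  | nil => cases v <;> rfl
  | cons e es ih => cases v with
    | nil => rfl
    | cons p v => exact congrArg₂ _ rfl (ih v _)

end

theorem behavior_relabel [AddCommMonoid M] (val : List ((M × M) × ℝ≥0) → M) [Finite Γ]
    (W : WTA Γ M) (h : Γ → A) (w : TimedWord A) :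
    (W.relabel h).behavior val w = pushQTL h (W.behavior val) w := by
  refine behavior_eq_pushQTL_of_bijOn val _ W h w (fun p => W.relabelRun h none p.2)
    ⟨?_, ?_, ?_⟩ ?_
  · rintro ⟨v, es⟩ ⟨rfl, ℓ₀, hℓ₀, hrun⟩
    exact ⟨(ℓ₀, none), ⟨ℓ₀, hℓ₀, rfl⟩, W.isRunFrom_relabel h hrun none⟩
  · rintro ⟨v₁, es₁⟩ ⟨hv₁, _, -, hrun₁⟩ ⟨v₂, es₂⟩ ⟨hv₂, _, -, hrun₂⟩ hes
    replace hes : es₁ = es₂ := W.relabelRun_injective h none hes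
    subst hes
    exact Prod.ext (eq_of_map_fst_eq_of_mapTimedWord_eq
      (hrun₁.map_label.symm.trans hrun₂.map_label) (hv₁.trans hv₂.symm)) rfl
  · rintro es' ⟨_, ⟨ℓ₀, hℓ₀, rfl⟩, hrun'⟩
    obtain ⟨v, es, hrun, hv, rfl⟩ := W.exists_isRunFrom_of_isRunFrom_relabel h hrun'
    have hne : v ≠ [] := by
      rintro rfl
      exact w.2 hv.symm
    exact ⟨(⟨v, hne⟩, es), ⟨Subtype.ext hv, ℓ₀, hℓ₀, hrun⟩, rfl⟩
  · rintro ⟨v, es⟩ ⟨rfl, -⟩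
    exact congrArg val (W.runWord_relabelRun h v.1 es none).symm

theorem runWord_ne_nil (W : WTA A M) {ℓ : W.L} {ν : ClockVal W.C} {w : List (A × ℝ≥0)}
    {es : List (Edge W.L A W.C)} (hrun : W.IsRunFrom ℓ ν w es) (hw : w ≠ []) :
    W.runWord w es ≠ [] := by
  rintro hnil
  rcases List.zipWith_eq_nil_iff.mp hnil with hnil | rfl
  · exact hw hnil
  · exact hw (List.map_eq_nil_iff.mp (hrun.map_label.symm.trans List.map_nil))

/-- Edges outside `W.E` occur in no run; the junk letter `none` they get also makes the
alphabet `Option W.E` nonempty. -/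
noncomputable def edgeLetter (W : WTA A M) (e : Edge W.L A W.C) : Option W.E :=
  if he : e ∈ W.E then some ⟨e, he⟩ else none

theorem edgeLetter_of_mem (W : WTA A M) {e : Edge W.L A W.C} (he : e ∈ W.E) :
    W.edgeLetter e = some ⟨e, he⟩ :=
  dif_pos he

theorem edgeLetter_injOn (W : WTA A M) : Set.InjOn W.edgeLetter W.E := fun e₁ he₁ e₂ he₂ he => by
  simpa [W.edgeLetter_of_mem he₁, W.edgeLetter_of_mem he₂] using he

noncomputable def edgeLabel [Nonempty A] (W : WTA A M) (o : Option W.E) : A :=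
  o.elim (Classical.arbitrary A) (·.1.label)

/-- The fresh initial location `none` of `W.sequentialize` stands for every initial location
of `W`. -/
def StandsFor (W : WTA A M) (o : Option W.L) (ℓ : W.L) : Prop :=
  o = some ℓ ∨ o = none ∧ ℓ ∈ W.I

@[simp]
theorem standsFor_some (W : WTA A M) {ℓ' ℓ : W.L} : W.StandsFor (some ℓ') ℓ ↔ ℓ' = ℓ := by
  simp [StandsFor, eq_comm]

@[simp]
theorem standsFor_none (W : WTA A M) {ℓ : W.L} : W.StandsFor none ℓ ↔ ℓ ∈ W.I := by
  simp [StandsFor]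

noncomputable def seqEdge (W : WTA A M) (o : Option W.L) (e : Edge W.L A W.C) :
    Edge (Option W.L) (Option W.E) W.C :=
  ⟨o, W.edgeLetter e, e.guard, e.reset, some e.dst⟩

noncomputable def sequentialize [Zero M] (W : WTA A M) : WTA (Option W.E) M where
  L := Option W.L
  C := W.C
  finL := by have := W.finL; infer_instance
  finC := W.finC
  I := {none}
  F := some '' W.F
  E := (fun p => W.seqEdge p.1 p.2) ''
    {p : Option W.L × Edge W.L A W.C | p.2 ∈ W.E ∧ W.StandsFor p.1 p.2.src}
  finE := by
    have := W.finL
    exact ((Set.finite_univ.prod W.finE).subset fun _ hp => ⟨trivial, hp.1⟩).image _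
  wtL _ := 0
  wtE e := e.label.elim 0 fun e => W.wtE e.1

noncomputable def seqRun (W : WTA A M) :
    Option W.L → List (Edge W.L A W.C) → List (Edge (Option W.L) (Option W.E) W.C)
  | _, [] => []
  | o, e :: es => W.seqEdge o e :: W.seqRun (some e.dst) es

noncomputable def edgeWord (W : WTA A M) (w : List (A × ℝ≥0)) (es : List (Edge W.L A W.C)) :
    List (Option W.E × ℝ≥0) :=
  List.zipWith (fun p e => (W.edgeLetter e, p.2)) w es

theorem map_edgeWord [Nonempty A] (W : WTA A M) {ℓ : W.L} {ν : ClockVal W.C}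
    {w : List (A × ℝ≥0)} {es : List (Edge W.L A W.C)} (hrun : W.IsRunFrom ℓ ν w es) :
    (W.edgeWord w es).map (fun p => (W.edgeLabel p.1, p.2)) = w := by
  induction w generalizing ℓ ν es with
  | nil => cases es with
    | nil => rfl
    | cons e es => exact hrun.elim
  | cons p w ih => cases es with
    | nil => exact hrun.elim
    | cons e es =>
      obtain ⟨he, -, hlabel, -, hrest⟩ := hrun
      refine congrArg₂ List.cons (Prod.ext ?_ rfl) (ih hrest)
      simp [edgeLabel, W.edgeLetter_of_mem he, hlabel]

section

variable [Zero M]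

noncomputable def seqRunEdges (W : WTA A M)
    (es' : List (Edge W.sequentialize.L (Option W.E) W.sequentialize.C)) :
    List (Edge W.L A W.C) :=
  es'.filterMap fun e => e.label.map Subtype.val

theorem seqRunEdges_seqRun (W : WTA A M) {es : List (Edge W.L A W.C)}
    (hes : ∀ e ∈ es, e ∈ W.E) (o : Option W.L) : W.seqRunEdges (W.seqRun o es) = es := by
  induction es generalizing o with
  | nil => rfl
  | cons e es ih =>
    rw [List.forall_mem_cons] at hes
    calc W.seqRunEdges (W.seqRun o (e :: es))
        = e :: W.seqRunEdges (W.seqRun (some e.dst) es) :=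
          List.filterMap_cons_some (by simp [seqEdge, W.edgeLetter_of_mem hes.1])
      _ = e :: es := by rw [ih hes.2]

theorem sequential_sequentialize (W : WTA A M) : W.sequentialize.Sequential := by
  refine ⟨⟨none, rfl⟩, ?_⟩
  rintro _ ⟨⟨o₁, e₁⟩, ⟨he₁, -⟩, rfl⟩ _ ⟨⟨o₂, e₂⟩, ⟨he₂, -⟩, rfl⟩ hsrc hlabel
  obtain rfl : e₁ = e₂ := W.edgeLetter_injOn he₁ he₂ hlabel
  obtain rfl : o₁ = o₂ := hsrc
  rfl

theorem isRunFrom_sequentialize_some (W : WTA A M) {ℓ : W.L} {ν : ClockVal W.C}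
    {w : List (A × ℝ≥0)} {es : List (Edge W.L A W.C)} (hrun : W.IsRunFrom ℓ ν w es) :
    W.sequentialize.IsRunFrom (some ℓ) ν (W.edgeWord w es) (W.seqRun (some ℓ) es) := by
  induction w generalizing ℓ ν es with
  | nil => cases es with
    | nil => exact ⟨ℓ, hrun, rfl⟩
    | cons e es => exact hrun.elim
  | cons p w ih => cases es with
    | nil => exact hrun.elim
    | cons e es =>
      obtain ⟨he, rfl, -, hguard, hrest⟩ := hrun
      exact ⟨⟨(some e.src, e), ⟨he, Or.inl rfl⟩, rfl⟩, rfl, rfl, hguard, ih hrest⟩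

theorem isRunFrom_sequentialize_none (W : WTA A M) {ℓ : W.L} {ν : ClockVal W.C}
    {w : List (A × ℝ≥0)} {es : List (Edge W.L A W.C)} (hrun : W.IsRunFrom ℓ ν w es)
    (hℓ : ℓ ∈ W.I) (hw : w ≠ []) :
    W.sequentialize.IsRunFrom none ν (W.edgeWord w es) (W.seqRun none es) := by
  match w, es, hrun with
  | [], _, _ => exact absurd rfl hw
  | _ :: _, e :: _, ⟨he, hsrc, _, hguard, hrest⟩ =>
    exact ⟨⟨(none, e), ⟨he, Or.inr ⟨rfl, hsrc ▸ hℓ⟩⟩, rfl⟩, rfl, rfl, hguard,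
      W.isRunFrom_sequentialize_some hrest⟩

theorem exists_isRunFrom_of_isRunFrom_sequentialize [Nonempty A] (W : WTA A M)
    {o : Option W.L} {ν : ClockVal W.C} {v : List (Option W.E × ℝ≥0)}
    {es' : List (Edge (Option W.L) (Option W.E) W.C)}
    (hrun : W.sequentialize.IsRunFrom o ν v es') :
    ∃ ℓ es, W.StandsFor o ℓ ∧
      W.IsRunFrom ℓ ν (v.map fun p => (W.edgeLabel p.1, p.2)) es ∧ W.seqRun o es = es' := by
  induction v generalizing o ν es' with
  | nil => cases es' with
    | nil =>
      obtain ⟨ℓ, hℓ, rfl⟩ := hrun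
      exact ⟨ℓ, [], Or.inl rfl, hℓ, rfl⟩
    | cons e es => exact hrun.elim
  | cons p v ih => cases es' with
    | nil => exact hrun.elim
    | cons e' es' =>
      obtain ⟨⟨o', e⟩, ⟨he, ho'⟩, rfl⟩ := hrun.1
      obtain ⟨-, rfl, hlabel, hguard, hrest⟩ := hrun
      obtain ⟨ℓ, es, hℓ, hrun, rfl⟩ := ih hrest
      obtain rfl := W.standsFor_some.mp hℓ
      refine ⟨e.src, e :: es, ho', ⟨he, rfl, ?_, hguard, hrun⟩, rfl⟩
      rw [← hlabel]
      simp [seqEdge, edgeLabel, W.edgeLetter_of_mem he]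

theorem map_runWord_seqRun [Nonempty A] (W : WTA A M) (v : List (Option W.E × ℝ≥0))
    {es : List (Edge W.L A W.C)} (hes : ∀ e ∈ es, e ∈ W.E) (o : Option W.L) :
    (W.sequentialize.runWord v (W.seqRun o es)).map (fun p => (p.1.2, p.2)) =
      (W.runWord (v.map fun p => (W.edgeLabel p.1, p.2)) es).map (fun p => (p.1.2, p.2)) := by
  induction es generalizing v o with
  | nil => cases v <;> rfl
  | cons e es ih => cases v with
    | nil => rfl
    | cons p v =>
      rw [List.forall_mem_cons] at hes
      refine congrArg₂ List.cons ?_ (ih v hes.2 _)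
      simp [sequentialize, seqEdge, W.edgeLetter_of_mem hes.1]

end

theorem pushQTL_sequentialize [AddCommMonoid M] (val : List ((M × M) × ℝ≥0) → M)
    (hval : LocIndep val) [Nonempty A] (W : WTA A M) (w : TimedWord A) :
    pushQTL W.edgeLabel (W.sequentialize.behavior val) w = W.behavior val w := by
  have := W.finE.to_subtype
  refine (behavior_eq_pushQTL_of_bijOn val W W.sequentialize W.edgeLabel w
    (fun p => W.seqRunEdges p.2) ⟨?_, ?_, ?_⟩ ?_).symm
  · rintro ⟨v, es'⟩ ⟨rfl, _, rfl, hrun'⟩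
    obtain ⟨ℓ, es, hℓ, hrun, rfl⟩ := W.exists_isRunFrom_of_isRunFrom_sequentialize hrun'
    refine ⟨ℓ, W.standsFor_none.mp hℓ, ?_⟩
    dsimp only
    rwa [W.seqRunEdges_seqRun hrun.mem_E]
  · rintro ⟨v₁, es₁'⟩ ⟨hv₁, _, rfl, hrun₁'⟩ ⟨v₂, es₂'⟩ ⟨hv₂, _, rfl, hrun₂'⟩ hes
    obtain ⟨_, es₁, -, hrun₁, rfl⟩ := W.exists_isRunFrom_of_isRunFrom_sequentialize hrun₁'
    obtain ⟨_, es₂, -, hrun₂, rfl⟩ := W.exists_isRunFrom_of_isRunFrom_sequentialize hrun₂'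
    simp only [W.seqRunEdges_seqRun hrun₁.mem_E, W.seqRunEdges_seqRun hrun₂.mem_E] at hes
    subst hes
    exact Prod.ext (eq_of_map_fst_eq_of_mapTimedWord_eq
      (hrun₁'.map_label.symm.trans hrun₂'.map_label) (hv₁.trans hv₂.symm)) rfl
  · rintro es ⟨ℓ₀, hℓ₀, hrun⟩
    have hv := W.map_edgeWord hrun
    have hne : W.edgeWord w.1 es ≠ [] := by
      intro hnil
      exact w.2 (by rw [← hv, hnil, List.map_nil])
    exact ⟨(⟨_, hne⟩, W.seqRun none es),
      ⟨Subtype.ext hv, none, rfl, W.isRunFrom_sequentialize_none hrun hℓ₀ w.2⟩,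
      W.seqRunEdges_seqRun hrun.mem_E none⟩
  · rintro ⟨v, es'⟩ ⟨rfl, _, rfl, hrun'⟩
    obtain ⟨_, es, -, hrun, rfl⟩ := W.exists_isRunFrom_of_isRunFrom_sequentialize hrun'
    rw [W.seqRunEdges_seqRun hrun.mem_E]
    exact hval _ _ (W.sequentialize.runWord_ne_nil hrun' v.2)
      (W.map_runWord_seqRun v.1 hrun.mem_E none)

end WTA

theorem hmem_seq_eq_rec_of_locIndep_general {S M : Type} [Nonempty S]
    [AddCommMonoid M] (val : List ((M × M) × ℝ≥0) → M) (hli : LocIndep val) :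
    ∀ 𝕃 : TimedWord S → M,
      HMem val (fun {_} T => T.Sequential) 𝕃 ↔ QTLRecognizable val 𝕃 := by
  intro 𝕃
  constructor
  · rintro ⟨Γ, _, -, h, r, ⟨W, -, hW⟩, h𝕃⟩
    refine ⟨W.relabel h, fun w => ?_⟩
    rw [W.behavior_relabel val h w, h𝕃, funext hW]
  · rintro ⟨W, hW⟩
    have := W.finE.to_subtype
    refine ⟨Option W.E, inferInstance, inferInstance, W.edgeLabel, W.sequentialize.behavior val,
      ⟨W.sequentialize, W.sequential_sequentialize, fun _ => rfl⟩, fun w => ?_⟩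
    rw [W.pushQTL_sequentialize val hli w, hW]

/-- If `𝕄` is a location-independent timed valuation monoid, then
`H^Seq(Σ,𝕄) = Rec(Σ,𝕄)`. -/
theorem hmem_seq_eq_rec_of_locIndep {S M : Type} [Finite S] [Nonempty S]
    [AddCommMonoid M] (val : List ((M × M) × ℝ≥0) → M) (hli : LocIndep val) :
    ∀ 𝕃 : TimedWord S → M,
      HMem val (fun {_} T => T.Sequential) 𝕃 ↔ QTLRecognizable val 𝕃 :=
  hmem_seq_eq_rec_of_locIndep_general val hli
end

section
/- Let Σ = {a,b} be a two-letter alphabet and 𝕄 = 𝕄^sum. Define the quantitative timed language 𝕃 : 𝕋Σ⁺ → ℝ ∪ {∞} by 𝕃((a₁,t₁)…(aₙ,tₙ)) = t₁ if a₁ = a and 𝕃((a₁,t₁)…(aₙ,tₙ)) = 2·t₁ if a₁ = b. Then 𝕃 ∈ Rec(Σ,𝕄^sum) but 𝕃 ∉ H^Seq(Σ,𝕄^sum). -/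
open scoped NNReal Classical

/-! # The timed valuation monoid 𝕄^sum = (ℝ ∪ {∞}, min, val^sum, ∞) -/

/-- The domain `ℝ ∪ {∞}` of `𝕄^sum`, equipped with `+ = min` and `𝟘 = ∞` via the
tropical `AddCommMonoid` structure on `Tropical (WithTop ℝ)`. -/
abbrev MSum : Type := Tropical (WithTop ℝ)

/-- Multiplication `m · t` of `m ∈ ℝ ∪ {∞}` by a time `t ∈ ℝ≥0`, with the convention
`∞ · t = ∞` (for every `t`, including `t = 0`). -/
noncomputable def mulTime (m : WithTop ℝ) (t : ℝ≥0) : WithTop ℝ :=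
  WithTop.map (fun r => r * (t : ℝ)) m

/-- `val^sum(((m₁,m₁'),t₁)…((mₙ,mₙ'),tₙ)) = Σᵢ (mᵢ·tᵢ + mᵢ')`, computed in `ℝ ∪ {∞}`
with `∞` absorbing for `+` and `·`. -/
noncomputable def valSum : List ((MSum × MSum) × ℝ≥0) → MSum := fun l =>
  Tropical.trop ((l.map (fun p => mulTime p.1.1.untrop p.2 + p.1.2.untrop)).sum)

/-- The quantitative timed language over `Σ = {a,b}` (modelled as `Bool`, `a = true`,
`b = false`) and `𝕄^sum` given by `𝕃((a₁,t₁)…(aₙ,tₙ)) = t₁` if `a₁ = a` and `= 2·t₁`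
if `a₁ = b`. -/
noncomputable def Lfirst : TimedWord Bool → MSum := fun w =>
  Tropical.trop
    ((if (w.1.head w.2).1 = true then (((w.1.head w.2).2 : ℝ) : WithTop ℝ)
      else ((2 * ((w.1.head w.2).2 : ℝ) : ℝ) : WithTop ℝ)))

/-!
A weighted timed automaton can read `𝕃` by guessing the first letter nondeterministically with two
initial locations of slopes `1` and `2`. With a single initial location `ℓ₀`, however, every run on a
one-letter word `(γ, t)` has weight `wt(ℓ₀)·t + wt(e)` for an edge `e`, and a minimum over such runs
(also after renaming letters) keeps this shape. Evaluating `𝕃` on `(a, t)` and on `(b, t)` then gives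
`t = wt(ℓ₀)·t + c` and `2t = wt(ℓ₀)·t + c'`, so every `t ≥ 0` is a difference of two of the finitely
many edge weights.
-/

open Tropical

def oneWord {A : Type} (a : A) (t : ℝ≥0) : TimedWord A := ⟨[(a, t)], List.cons_ne_nil _ _⟩

theorem mulTime_coe (r : ℝ) (t : ℝ≥0) : mulTime r t = ((r * t : ℝ) : WithTop ℝ) :=
  WithTop.map_coe _ _

theorem mulTime_zero (t : ℝ≥0) : mulTime 0 t = 0 := by
  simpa using mulTime_coe 0 t

theorem valSum_singleton (m m' : MSum) (t : ℝ≥0) :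
    valSum [((m, m'), t)] = trop (mulTime m.untrop t + m'.untrop) := by
  simp [valSum]

theorem Lfirst_oneWord_true (t : ℝ≥0) : Lfirst (oneWord true t) = trop ((t : ℝ) : WithTop ℝ) := by
  simp [Lfirst, oneWord]

theorem Lfirst_oneWord_false (t : ℝ≥0) :
    Lfirst (oneWord false t) = trop ((2 * t : ℝ) : WithTop ℝ) := by
  simp [Lfirst, oneWord]

theorem Lfirst_ne_zero (w : TimedWord Bool) : Lfirst w ≠ 0 := by
  rw [Lfirst, Ne, ← untrop_inj_iff]
  split_ifs <;> exact WithTop.coe_ne_top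

namespace LfirstWTA

def firstEdge (a : Bool) : Edge (Option Bool) Bool Empty := ⟨some a, a, .tt, ∅, none⟩

def loopEdge (a : Bool) : Edge (Option Bool) Bool Empty := ⟨none, a, .tt, ∅, none⟩

noncomputable abbrev wta : WTA Bool MSum where
  L := Option Bool
  C := Empty
  finL := inferInstance
  finC := inferInstance
  I := Set.range some
  F := {none}
  E := Set.range firstEdge ∪ Set.range loopEdge
  finE := (Set.finite_range _).union (Set.finite_range _)
  wtL ℓ := trop (ℓ.elim 0 fun a => if a then 1 else 2)
  wtE _ := trop 0

theorem isRunFrom_none_iff (l : List (Bool × ℝ≥0)) (ν : ClockVal Empty)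
    (es : List (Edge (Option Bool) Bool Empty)) :
    wta.IsRunFrom none ν l es ↔ es = l.map (loopEdge ·.1) := by
  induction l generalizing ν es with
  | nil => cases es <;> simp [TimedAutomaton.IsRunFrom]
  | cons p l ih =>
    obtain ⟨a, t⟩ := p
    cases es with
    | nil => simp [TimedAutomaton.IsRunFrom]
    | cons e es =>
      simp only [TimedAutomaton.IsRunFrom, List.map_cons, List.cons.injEq]
      constructor
      · rintro ⟨⟨b, rfl⟩ | ⟨b, rfl⟩, hsrc, rfl, -, hrest⟩
        · cases hsrc
        · exact ⟨rfl, (ih _ _).1 hrest⟩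
      · rintro ⟨rfl, rfl⟩
        exact ⟨Or.inr ⟨a, rfl⟩, rfl, rfl, trivial, (ih _ _).2 rfl⟩

theorem runOn_eq {a : Bool} {t : ℝ≥0} {l : List (Bool × ℝ≥0)} (hw : (a, t) :: l ≠ []) :
    wta.RunOn ⟨(a, t) :: l, hw⟩ = {firstEdge a :: l.map (loopEdge ·.1)} := by
  ext es
  constructor
  · rintro ⟨_, ⟨b, rfl⟩, hrun⟩
    match es, hrun with
    | e :: es, hrun =>
      obtain ⟨⟨c, rfl⟩ | ⟨c, rfl⟩, hsrc, hlab, -, hrest⟩ := hrun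
      · cases hsrc; cases hlab
        rw [(isRunFrom_none_iff _ _ _).1 hrest]; rfl
      · cases hsrc
  · rintro rfl
    exact ⟨some a, ⟨a, rfl⟩, Or.inl ⟨a, rfl⟩, rfl, rfl, trivial, (isRunFrom_none_iff _ _ _).2 rfl⟩

theorem behavior_eq (w : TimedWord Bool) : wta.behavior valSum w = Lfirst w := by
  obtain ⟨_ | ⟨⟨a, t⟩, l⟩, hw⟩ := w
  · exact absurd rfl hw
  rw [WTA.behavior, runOn_eq, finsum_mem_singleton]
  simp only [valSum, WTA.runWord, trop_zero, firstEdge, loopEdge, List.zipWith_cons_cons,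
    Option.elim_some, List.zipWith_map_right, Option.elim_none, List.zipWith_self, List.map_cons,
    untrop_trop, untrop_one, add_zero, List.map_map, Function.comp_def, mulTime_zero,
    List.map_const', List.sum_cons, List.sum_replicate, nsmul_zero, Lfirst, List.head_cons]
  cases a <;> simp [← WithTop.coe_one, ← WithTop.coe_ofNat, mulTime_coe, mul_comm]

end LfirstWTA

theorem qtlRecognizable_Lfirst : QTLRecognizable valSum Lfirst :=
  ⟨LfirstWTA.wta, LfirstWTA.behavior_eq⟩

theorem Tropical.finsum_mem_mem {ι R : Type*} [LinearOrder R] [OrderTop R] {s : Set ι}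
    {f : ι → Tropical R} {S : Set (Tropical R)} (h0 : 0 ∈ S) (hf : ∀ i ∈ s, f i ∈ S) :
    ∑ᶠ i ∈ s, f i ∈ S := by
  refine finsum_mem_induction (· ∈ S) h0 (fun x y hx hy => ?_) hf
  rcases le_total x y with hxy | hxy
  · rwa [Tropical.add_eq_left hxy]
  · rwa [Tropical.add_eq_right hxy]

theorem TimedAutomaton.exists_edge_of_mem_runOn_oneWord {A : Type} (T : TimedAutomaton A)
    {a : A} {t : ℝ≥0} {es : List (Edge T.L A T.C)} (hes : es ∈ T.RunOn (oneWord a t)) :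
    ∃ e ∈ T.E, e.src ∈ T.I ∧ es = [e] := by
  obtain ⟨ℓ, hℓ, hrun⟩ := hes
  match es, hrun with
  | [e], ⟨he, hsrc, _⟩ => exact ⟨e, he, hsrc ▸ hℓ, rfl⟩
  | e :: _ :: _, ⟨_, _, _, _, hrest⟩ => exact hrest.elim

theorem WTA.behavior_oneWord_mem {Γ : Type} (W : WTA Γ MSum) {ℓ₀ : W.L} (hI : W.I = {ℓ₀})
    (γ : Γ) (t : ℝ≥0) :
    W.behavior valSum (oneWord γ t) ∈
      insert 0 ((fun e => trop (mulTime (W.wtL ℓ₀).untrop t + (W.wtE e).untrop)) '' W.E) := by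
  refine Tropical.finsum_mem_mem (Set.mem_insert _ _) fun es hes => ?_
  obtain ⟨e, he, hsrc, rfl⟩ := W.exists_edge_of_mem_runOn_oneWord hes
  rw [hI, Set.mem_singleton_iff] at hsrc
  exact Set.mem_insert_of_mem _ ⟨e, he, by rw [← hsrc]; exact (valSum_singleton _ _ _).symm⟩

theorem exists_eq_oneWord_of_mapTimedWord_eq {Γ A : Type} {h : Γ → A} {v : TimedWord Γ} {a : A}
    {t : ℝ≥0} (hv : mapTimedWord h v = oneWord a t) : ∃ γ, v = oneWord γ t := by
  obtain ⟨l, hl⟩ := v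
  obtain ⟨⟨γ, s⟩, rfl, hγs⟩ := List.map_eq_singleton_iff.mp (congrArg Subtype.val hv)
  exact ⟨γ, by simp_all [oneWord]⟩

theorem pushQTL_oneWord_mem {Γ A R : Type} [LinearOrder R] [OrderTop R] (h : Γ → A)
    {r : TimedWord Γ → Tropical R} {S : Set (Tropical R)} (h0 : 0 ∈ S) {t : ℝ≥0}
    (hr : ∀ γ, r (oneWord γ t) ∈ S) (a : A) : pushQTL h r (oneWord a t) ∈ S :=
  Tropical.finsum_mem_mem h0 fun v hv => by
    obtain ⟨γ, rfl⟩ := exists_eq_oneWord_of_mapTimedWord_eq hv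
    exact hr γ

theorem exists_coe_eq_sub_of_coe_eq_add {M c c' : WithTop ℝ} {t : ℝ}
    (h₁ : (t : WithTop ℝ) = M + c) (h₂ : ((2 * t : ℝ) : WithTop ℝ) = M + c') :
    ∃ κ κ' : ℝ, c = κ ∧ c' = κ' ∧ t = κ' - κ := by
  lift M to ℝ using by rintro rfl; simp only [WithTop.top_add, WithTop.coe_ne_top] at h₁
  lift c to ℝ using by rintro rfl; simp only [WithTop.add_top, WithTop.coe_ne_top] at h₁
  lift c' to ℝ using by rintro rfl; simp only [WithTop.add_top, WithTop.coe_ne_top] at h₂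
  norm_cast at h₁ h₂
  exact ⟨c, c', rfl, rfl, by linarith⟩

theorem not_hMem_sequential_Lfirst : ¬ HMem valSum (fun {_} T => T.Sequential) Lfirst := by
  rintro ⟨Γ, -, -, h, r, ⟨W, ⟨⟨ℓ₀, hI⟩, -⟩, hW⟩, hL⟩
  have hweight : ∀ (a : Bool) (t : ℝ≥0), ∃ e ∈ W.E,
      Lfirst (oneWord a t) = trop (mulTime (W.wtL ℓ₀).untrop t + (W.wtE e).untrop) := by
    intro a t
    have hmem := pushQTL_oneWord_mem h (Set.mem_insert _ _)
      (fun γ => hW (oneWord γ t) ▸ W.behavior_oneWord_mem hI γ t) a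
    rw [← hL] at hmem
    rcases hmem with h0 | ⟨e, he, hval⟩
    · exact absurd h0 (Lfirst_ne_zero _)
    · exact ⟨e, he, hval.symm⟩
  set weights : Set ℝ := (↑) ⁻¹' ((fun e => (W.wtE e).untrop) '' W.E)
  have hfin : weights.Finite := (W.finE.image _).preimage WithTop.coe_injective.injOn
  have hdiff : ∀ t : ℝ≥0, (t : ℝ) ∈ Set.image2 (fun κ κ' => κ' - κ) weights weights := by
    intro t
    obtain ⟨e, he, h₁⟩ := hweight true t
    obtain ⟨e', he', h₂⟩ := hweight false t
    rw [Lfirst_oneWord_true, trop_inj_iff] at h₁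
    rw [Lfirst_oneWord_false, trop_inj_iff] at h₂
    obtain ⟨κ, κ', hκ, hκ', ht⟩ := exists_coe_eq_sub_of_coe_eq_add h₁ h₂
    exact ⟨κ, ⟨e, he, hκ⟩, κ', ⟨e', he', hκ'⟩, ht.symm⟩
  exact Set.infinite_of_injective_forall_mem NNReal.coe_injective hdiff (hfin.image2 _ hfin)

/-- The quantitative timed language `𝕃` above satisfies
`𝕃 ∈ Rec(Σ,𝕄^sum)` but `𝕃 ∉ H^Seq(Σ,𝕄^sum)`. -/
theorem Lfirst_recognizable_not_hmem_seq :
    QTLRecognizable valSum Lfirst ∧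
    ¬ HMem valSum (fun {_} T => T.Sequential) Lfirst :=
  ⟨qtlRecognizable_Lfirst, not_hMem_sequential_Lfirst⟩
end

section
/- Let Σ be an alphabet. The quantitative timed language 𝕃 : 𝕋Σ⁺ → ℝ ∪ {∞} defined by 𝕃(w) = |w|², where |w| is the number of letters of w, is not recognizable by any weighted timed automaton over Σ and the timed valuation monoid 𝕄^sum. -/
open scoped NNReal Classical

/-! ### Auxiliary material for the proof of Statement 19 -/

namespace LSq

lemma zero_add_zero {C : Type} : (ClockVal.zero (C := C)).add 0 = ClockVal.zero := by
  funext x; simp [ClockVal.add, ClockVal.zero]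

lemma zero_reset {C : Type} (Λ : Set C) :
    (ClockVal.zero (C := C)).reset Λ = ClockVal.zero := by
  funext x; simp [ClockVal.reset, ClockVal.zero]

/-- Paths reading only the letter `a` with all time stamps `0`. -/
def Chain0 {A : Type} (T : TimedAutomaton A) (a : A) :
    T.L → List (Edge T.L A T.C) → T.L → Prop
  | ℓ, [], ℓ' => ℓ = ℓ'
  | ℓ, e :: es, ℓ' =>
      e ∈ T.E ∧ e.src = ℓ ∧ e.label = a ∧ e.guard.Sat ClockVal.zero ∧
        Chain0 T a e.dst es ℓ'

lemma isRunFrom_replicate_iff {A : Type} (T : TimedAutomaton A) (a : A) :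
    ∀ (es : List (Edge T.L A T.C)) (ℓ : T.L),
      T.IsRunFrom ℓ ClockVal.zero (List.replicate es.length (a, 0)) es ↔
        ∃ ℓ', Chain0 T a ℓ es ℓ' ∧ ℓ' ∈ T.F
  | [], ℓ => by
      simp [TimedAutomaton.IsRunFrom, Chain0]
  | e :: es, ℓ => by
      rw [List.length_cons, List.replicate_succ]
      show (e ∈ T.E ∧ e.src = ℓ ∧ e.label = a ∧ e.guard.Sat (ClockVal.zero.add 0) ∧
          T.IsRunFrom e.dst ((ClockVal.zero.add 0).reset e.reset)
            (List.replicate es.length (a, 0)) es) ↔ _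
      rw [zero_add_zero, zero_reset, isRunFrom_replicate_iff T a es e.dst]
      show _ ↔ ∃ ℓ', (e ∈ T.E ∧ e.src = ℓ ∧ e.label = a ∧ e.guard.Sat ClockVal.zero ∧
        Chain0 T a e.dst es ℓ') ∧ ℓ' ∈ T.F
      tauto

lemma isRunFrom_spec {A : Type} (T : TimedAutomaton A) :
    ∀ (w : List (A × ℝ≥0)) (es : List (Edge T.L A T.C)) (ℓ : T.L) (ν : ClockVal T.C),
      T.IsRunFrom ℓ ν w es → es.length = w.length ∧ ∀ e ∈ es, e ∈ T.E
  | [], [], _, _, _ => by simp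
  | [], e :: es, ℓ, ν, h => h.elim
  | (a, t) :: w, [], ℓ, ν, h => h.elim
  | (a, t) :: w, e :: es, ℓ, ν, h => by
      obtain ⟨hE, -, -, -, hrest⟩ := h
      obtain ⟨h1, h2⟩ := isRunFrom_spec T w es _ _ hrest
      refine ⟨by simp [h1], ?_⟩
      intro x hx
      rcases List.mem_cons.1 hx with rfl | hx
      · exact hE
      · exact h2 x hx

lemma chain0_append {A : Type} (T : TimedAutomaton A) (a : A) :
    ∀ (p q : List (Edge T.L A T.C)) (ℓ ℓ'' : T.L),
      Chain0 T a ℓ (p ++ q) ℓ'' ↔ ∃ ℓ', Chain0 T a ℓ p ℓ' ∧ Chain0 T a ℓ' q ℓ''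
  | [], q, ℓ, ℓ'' => by simp [Chain0]
  | e :: p, q, ℓ, ℓ'' => by
      simp only [List.cons_append]
      show (e ∈ T.E ∧ e.src = ℓ ∧ e.label = a ∧ e.guard.Sat ClockVal.zero ∧
        Chain0 T a e.dst (p ++ q) ℓ'') ↔ _
      rw [chain0_append T a p q e.dst ℓ'']
      constructor
      · rintro ⟨h1, h2, h3, h4, ℓ', h5, h6⟩
        exact ⟨ℓ', ⟨h1, h2, h3, h4, h5⟩, h6⟩
      · rintro ⟨ℓ', ⟨h1, h2, h3, h4, h5⟩, h6⟩
        exact ⟨h1, h2, h3, h4, ℓ', h5, h6⟩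

lemma chain0_unique {A : Type} (T : TimedAutomaton A) (a : A) :
    ∀ (p : List (Edge T.L A T.C)) (ℓ ℓ₁ ℓ₂ : T.L),
      Chain0 T a ℓ p ℓ₁ → Chain0 T a ℓ p ℓ₂ → ℓ₁ = ℓ₂
  | [], ℓ, ℓ₁, ℓ₂, h1, h2 => by
      have e1 : ℓ = ℓ₁ := h1
      have e2 : ℓ = ℓ₂ := h2
      exact e1 ▸ e2
  | e :: p, ℓ, ℓ₁, ℓ₂, h1, h2 =>
      chain0_unique T a p e.dst ℓ₁ ℓ₂ h1.2.2.2.2 h2.2.2.2.2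

/-- The state after the first `i` steps. -/
def stateAt {A : Type} (T : TimedAutomaton A) (ℓ₀ : T.L)
    (es : List (Edge T.L A T.C)) (i : ℕ) : T.L :=
  (ℓ₀ :: es.map Edge.dst).getD i ℓ₀

lemma chain0_take {A : Type} (T : TimedAutomaton A) (a : A) :
    ∀ (es : List (Edge T.L A T.C)) (ℓ₀ ℓf : T.L), Chain0 T a ℓ₀ es ℓf →
      ∀ i, i ≤ es.length → Chain0 T a ℓ₀ (es.take i) (stateAt T ℓ₀ es i)
  | es, ℓ₀, ℓf, h, 0, _ => by
      simp only [List.take_zero]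
      show ℓ₀ = stateAt T ℓ₀ es 0
      rfl
  | [], ℓ₀, ℓf, h, i + 1, hi => by simp at hi
  | e :: es, ℓ₀, ℓf, h, i + 1, hi => by
      have hi' : i ≤ es.length := by simpa using hi
      have hst : stateAt T ℓ₀ (e :: es) (i + 1) = stateAt T e.dst es i := by
        simp only [stateAt, List.map_cons, List.getD_cons_succ]
        rw [List.getD_eq_getElem _ _ (by simp; omega),
            List.getD_eq_getElem _ _ (by simp; omega)]
      rw [List.take_succ_cons, hst]
      exact ⟨h.1, h.2.1, h.2.2.1, h.2.2.2.1,
        chain0_take T a es e.dst ℓf h.2.2.2.2 i hi'⟩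

/-- `m`-fold concatenation of a list. -/
def npow {α : Type} (q : List α) : ℕ → List α
  | 0 => []
  | m + 1 => q ++ npow q m

lemma npow_length {α : Type} (q : List α) : ∀ m, (npow q m).length = m * q.length
  | 0 => by simp [npow]
  | m + 1 => by
      simp [npow, npow_length q m]; ring

lemma chain0_npow {A : Type} (T : TimedAutomaton A) (a : A)
    {q : List (Edge T.L A T.C)} {ℓ : T.L} (h : Chain0 T a ℓ q ℓ) :
    ∀ m, Chain0 T a ℓ (npow q m) ℓ
  | 0 => rfl
  | m + 1 => by
      rw [npow, chain0_append]
      exact ⟨ℓ, h, chain0_npow T a h m⟩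

lemma finite_lists {α : Type} {s : Set α} (hs : s.Finite) :
    ∀ n : ℕ, {l : List α | l.length = n ∧ ∀ x ∈ l, x ∈ s}.Finite
  | 0 => Set.Finite.subset (Set.finite_singleton []) (by
      rintro l ⟨hl, -⟩
      simp [List.length_eq_zero_iff.mp hl])
  | n + 1 => by
      have him := (hs.prod (finite_lists hs n)).image (fun p => p.1 :: p.2)
      refine him.subset ?_
      rintro l ⟨hl, hmem⟩
      cases l with
      | nil => simp at hl
      | cons x t =>
        exact ⟨(x, t), Set.mem_prod.2 ⟨hmem x (by simp),
          ⟨by simpa using hl, fun y hy => hmem y (by simp [hy])⟩⟩, rfl⟩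

lemma runOn_finite {A : Type} (T : TimedAutomaton A) (w : TimedWord A) :
    (T.RunOn w).Finite := by
  refine (finite_lists T.finE w.1.length).subset ?_
  rintro es ⟨ℓ₀, -, hr⟩
  exact isRunFrom_spec T w.1 es ℓ₀ ClockVal.zero hr

/-- The cost of an edge (in a run where all time stamps are `0`). -/
noncomputable def c {A : Type} (W : WTA A MSum) (e : Edge W.L A W.C) : WithTop ℝ :=
  mulTime (W.wtL e.src).untrop 0 + (W.wtE e).untrop

lemma runWord_replicate {A : Type} (W : WTA A MSum) (a : A) :
    ∀ es : List (Edge W.L A W.C),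
      W.runWord (List.replicate es.length (a, 0)) es
        = es.map (fun e => ((W.wtL e.src, W.wtE e), (0 : ℝ≥0)))
  | [] => rfl
  | e :: es => by
      rw [List.length_cons, List.replicate_succ]
      simp only [WTA.runWord, List.zipWith_cons_cons, List.map_cons]
      exact congrArg _ (runWord_replicate W a es)

lemma valSum_eq {A : Type} (W : WTA A MSum) (a : A) (es : List (Edge W.L A W.C)) :
    (valSum (W.runWord (List.replicate es.length (a, 0)) es)).untrop
      = (es.map (c W)).sum := by
  rw [runWord_replicate]
  simp only [valSum, List.map_map, Tropical.untrop_trop]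
  rfl

lemma npow_sum {A : Type} (W : WTA A MSum) (q : List (Edge W.L A W.C)) {β : ℝ}
    (hq : (q.map (c W)).sum = ((β : ℝ) : WithTop ℝ)) :
    ∀ m : ℕ, ((npow q m).map (c W)).sum = (((m : ℝ) * β : ℝ) : WithTop ℝ)
  | 0 => by simp [npow]
  | m + 1 => by
      rw [npow, List.map_append, List.sum_append, hq, npow_sum W q hq m,
        ← WithTop.coe_add]
      norm_cast
      push_cast
      ring

lemma behavior_le {A : Type} (W : WTA A MSum) (w : TimedWord A)
    {es : List (Edge W.L A W.C)} (hes : es ∈ W.toTimedAutomaton.RunOn w) :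
    (W.behavior valSum w).untrop ≤ (valSum (W.runWord w.1 es)).untrop := by
  have hfin := runOn_finite W.toTimedAutomaton w
  rw [WTA.behavior, ← hfin.coe_toFinset, finsum_mem_coe_finset, Finset.untrop_sum']
  exact Finset.inf_le (hfin.mem_toFinset.2 hes)

lemma behavior_exists {A : Type} (W : WTA A MSum) (w : TimedWord A) {x : ℝ}
    (hx : W.behavior valSum w = Tropical.trop ((x : ℝ) : WithTop ℝ)) :
    ∃ es ∈ W.toTimedAutomaton.RunOn w,
      (valSum (W.runWord w.1 es)).untrop = ((x : ℝ) : WithTop ℝ) := by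
  have hfin := runOn_finite W.toTimedAutomaton w
  have h1 : hfin.toFinset.inf
      (Tropical.untrop ∘ fun es => valSum (W.runWord w.1 es)) = ((x : ℝ) : WithTop ℝ) := by
    have h := congrArg Tropical.untrop hx
    rw [WTA.behavior, ← hfin.coe_toFinset, finsum_mem_coe_finset,
      Finset.untrop_sum'] at h
    simpa using h
  have hne : hfin.toFinset.Nonempty := by
    rcases Finset.eq_empty_or_nonempty hfin.toFinset with he | hne
    · rw [he] at h1; simp at h1
    · exact hne
  obtain ⟨es, hmem, heq⟩ := Finset.exists_mem_eq_inf hfin.toFinset hne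
    (Tropical.untrop ∘ fun es => valSum (W.runWord w.1 es))
  exact ⟨es, hfin.mem_toFinset.1 hmem, heq.symm.trans h1⟩

end LSq

/-- The quantitative timed language `𝕃(w) = |w|²` (as an element of
`ℝ ∪ {∞}`) is not recognizable by any weighted timed automaton over `Σ` and `𝕄^sum`. -/
theorem lengthSquared_not_recognizable {S : Type} [Finite S] [Nonempty S] :
    ¬ QTLRecognizable valSum
        (fun w : TimedWord S => Tropical.trop (((w.1.length : ℝ) ^ 2 : ℝ) : WithTop ℝ)) := by
  rintro ⟨W, hW⟩
  obtain ⟨a⟩ := ‹Nonempty S›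
  haveI : Finite W.L := W.finL
  haveI : Fintype W.L := Fintype.ofFinite _
  set n : ℕ := Fintype.card W.L + 1 with hn
  have hwne : List.replicate n ((a : S), (0 : ℝ≥0)) ≠ [] := by
    intro hcon
    have := congrArg List.length hcon
    simp [hn] at this
  set wn : TimedWord S := ⟨List.replicate n (a, 0), hwne⟩ with hwn
  have hbeh : W.behavior valSum wn
      = Tropical.trop ((((n : ℝ) ^ 2 : ℝ)) : WithTop ℝ) := by
    simpa [hwn] using hW wn
  obtain ⟨es₀, hmem, hval⟩ := LSq.behavior_exists W wn hbeh
  obtain ⟨ℓ₀, hI, hrun⟩ := hmem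
  have hspec := LSq.isRunFrom_spec W.toTimedAutomaton wn.1 es₀ ℓ₀ ClockVal.zero hrun
  have hlen0 : es₀.length = n := by simpa [hwn] using hspec.1
  have hrun' : W.toTimedAutomaton.IsRunFrom ℓ₀ ClockVal.zero
      (List.replicate es₀.length (a, 0)) es₀ := by
    rw [hlen0]; exact hrun
  obtain ⟨ℓf, hch, hF⟩ := (LSq.isRunFrom_replicate_iff W.toTimedAutomaton a es₀ ℓ₀).1 hrun'
  -- pigeonhole: a repeated state
  obtain ⟨i, j, hij, hjn, hst⟩ :
      ∃ i j : ℕ, i < j ∧ j ≤ n ∧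
        LSq.stateAt W.toTimedAutomaton ℓ₀ es₀ i = LSq.stateAt W.toTimedAutomaton ℓ₀ es₀ j := by
    have hcard : Fintype.card W.L < Fintype.card (Fin (n + 1)) := by
      rw [Fintype.card_fin]; omega
    obtain ⟨i, j, hne, he⟩ := Fintype.exists_ne_map_eq_of_card_lt
      (fun i : Fin (n + 1) => LSq.stateAt W.toTimedAutomaton ℓ₀ es₀ i.1) hcard
    rcases Nat.lt_or_ge i.1 j.1 with h | h
    · exact ⟨i.1, j.1, h, Nat.lt_succ_iff.1 j.2, he⟩
    · have hlt : j.1 < i.1 :=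
        lt_of_le_of_ne h (fun hh => hne (Fin.ext hh.symm))
      exact ⟨j.1, i.1, hlt, Nat.lt_succ_iff.1 i.2, he.symm⟩
  set ℓm := LSq.stateAt W.toTimedAutomaton ℓ₀ es₀ i with hℓm
  set p := es₀.take i with hpdef
  set q := (es₀.drop i).take (j - i) with hqdef
  set r := es₀.drop j with hrdef
  have htj : es₀.take j = p ++ q := by
    have hj' : j = i + (j - i) := by omega
    rw [hpdef, hqdef, ← List.take_add, ← hj']
  have hsplit : (p ++ q) ++ r = es₀ := by
    rw [← htj, hrdef]; exact List.take_append_drop j es₀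
  have hp : LSq.Chain0 W.toTimedAutomaton a ℓ₀ p ℓm :=
    LSq.chain0_take W.toTimedAutomaton a es₀ ℓ₀ ℓf hch i (by omega)
  have hpq : LSq.Chain0 W.toTimedAutomaton a ℓ₀ (p ++ q) ℓm := by
    rw [← htj, hst]
    exact LSq.chain0_take W.toTimedAutomaton a es₀ ℓ₀ ℓf hch j (by omega)
  have hq : LSq.Chain0 W.toTimedAutomaton a ℓm q ℓm := by
    obtain ⟨ℓ', h1, h2⟩ := (LSq.chain0_append W.toTimedAutomaton a p q ℓ₀ ℓm).1 hpq
    rwa [LSq.chain0_unique W.toTimedAutomaton a p ℓ₀ ℓ' ℓm h1 hp] at h2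
  have hr : LSq.Chain0 W.toTimedAutomaton a ℓm r ℓf := by
    have hfull : LSq.Chain0 W.toTimedAutomaton a ℓ₀ ((p ++ q) ++ r) ℓf := by
      rw [hsplit]; exact hch
    obtain ⟨ℓ', h1, h2⟩ := (LSq.chain0_append W.toTimedAutomaton a (p ++ q) r ℓ₀ ℓf).1 hfull
    rwa [LSq.chain0_unique W.toTimedAutomaton a (p ++ q) ℓ₀ ℓ' ℓm h1 hpq] at h2
  have hqlen : q.length = j - i := by
    rw [hqdef]
    simp [List.length_take, List.length_drop, hlen0]
    omega
  -- extract the (finite) weights of the three pieces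
  have hsum : (es₀.map (LSq.c W)).sum = (((n : ℝ) ^ 2 : ℝ) : WithTop ℝ) := by
    rw [← LSq.valSum_eq W a es₀, hlen0]
    exact hval
  have hw : ((p.map (LSq.c W)).sum + (q.map (LSq.c W)).sum) + (r.map (LSq.c W)).sum
      = (((n : ℝ) ^ 2 : ℝ) : WithTop ℝ) := by
    rw [← hsum, ← hsplit]
    simp [List.sum_append, add_assoc]
  obtain ⟨u, γ, hu, hγ, huv⟩ := WithTop.add_eq_coe.1 hw
  obtain ⟨α, β, hα, hβ, hαβ⟩ := WithTop.add_eq_coe.1 hu.symm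
  -- the key pumping inequality
  have key : ∀ m : ℕ, 1 ≤ m → ((m : ℝ)) ^ 2 ≤ α + (m : ℝ) * β + γ := by
    intro m hm
    set ρ : List (Edge W.L S W.C) := p ++ LSq.npow q m ++ r with hρ
    have hρch : LSq.Chain0 W.toTimedAutomaton a ℓ₀ ρ ℓf := by
      rw [hρ, LSq.chain0_append]
      exact ⟨ℓm, (LSq.chain0_append W.toTimedAutomaton a p _ ℓ₀ ℓm).2
        ⟨ℓm, hp, LSq.chain0_npow W.toTimedAutomaton a hq m⟩, hr⟩
    have hL : ρ.length = p.length + m * q.length + r.length := by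
      rw [hρ]; simp [LSq.npow_length]; ring
    have hρlen : m ≤ ρ.length := by
      have h2 : m ≤ m * q.length := Nat.le_mul_of_pos_right m (by omega)
      rw [hL]
      exact le_trans h2 (le_trans (Nat.le_add_left _ _) (Nat.le_add_right _ _))
    have hρne : List.replicate ρ.length ((a : S), (0 : ℝ≥0)) ≠ [] := by
      have hne0 : ρ.length ≠ 0 := by omega
      intro hcon
      exact hne0 (by simpa using congrArg List.length hcon)
    set wm : TimedWord S := ⟨List.replicate ρ.length (a, 0), hρne⟩ with hwm
    have hmemρ : ρ ∈ W.toTimedAutomaton.RunOn wm :=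
      ⟨ℓ₀, hI, (LSq.isRunFrom_replicate_iff W.toTimedAutomaton a ρ ℓ₀).2 ⟨ℓf, hρch, hF⟩⟩
    have hle := LSq.behavior_le W wm hmemρ
    have hbm : (W.behavior valSum wm).untrop
        = ((((ρ.length : ℝ)) ^ 2 : ℝ) : WithTop ℝ) := by
      rw [hW wm]; simp [hwm]
    have hsm : (ρ.map (LSq.c W)).sum
        = ((α + (m : ℝ) * β + γ : ℝ) : WithTop ℝ) := by
      rw [hρ, List.map_append, List.sum_append, List.map_append, List.sum_append,
        ← hα, ← hγ, LSq.npow_sum W q hβ.symm m, ← WithTop.coe_add, ← WithTop.coe_add]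
    have hval2 : (valSum (W.runWord wm.1 ρ)).untrop
        = ((α + (m : ℝ) * β + γ : ℝ) : WithTop ℝ) := by
      rw [show wm.1 = List.replicate ρ.length ((a : S), (0 : ℝ≥0)) from rfl,
        LSq.valSum_eq W a ρ, hsm]
    rw [hbm, hval2] at hle
    have hr2 : ((ρ.length : ℝ)) ^ 2 ≤ α + (m : ℝ) * β + γ := by
      exact_mod_cast hle
    have hm2 : ((m : ℝ)) ^ 2 ≤ ((ρ.length : ℝ)) ^ 2 := by
      have hmr : (m : ℝ) ≤ (ρ.length : ℝ) := by exact_mod_cast hρlen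
      have hm0 : (0 : ℝ) ≤ (m : ℝ) := by positivity
      exact pow_le_pow_left₀ hm0 hmr 2
    linarith
  -- derive a contradiction
  obtain ⟨m, hm⟩ := exists_nat_gt (|α| + |β| + |γ| + 1)
  have hm1 : 1 ≤ m := by
    by_contra hcon
    have hm0 : m = 0 := by omega
    rw [hm0] at hm
    simp at hm
    nlinarith [abs_nonneg α, abs_nonneg β, abs_nonneg γ]
  have hkey := key m hm1
  have h1m : (1 : ℝ) ≤ (m : ℝ) := by exact_mod_cast hm1
  nlinarith [le_abs_self α, le_abs_self β, le_abs_self γ,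
    abs_nonneg α, abs_nonneg β, abs_nonneg γ,
    mul_le_mul_of_nonneg_left (le_abs_self β) (by linarith : (0 : ℝ) ≤ (m : ℝ)),
    mul_le_mul_of_nonneg_left hm.le (by linarith : (0 : ℝ) ≤ (m : ℝ))]
end
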